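/- arXiv:math/0012078 — 3 statements merged into one kernel-verified Lean document; each statement's English description precedes it below -/
import Mathlib

section
/- Catalan's constant is given by the convergent double series G = ∑_{n=1}^∞ ( (−1)^{n+1}/n ) · ∑_{k=0}^{n−1} (−1)^k/(2k+1). -/
open Real Filter Topology MeasureTheory intervalIntegral

/-- Catalan's constant `G = ∑_{n=0}^∞ (−1)^n/(2n+1)²`. -/
noncomputable def catalanConstant : ℝ := ∑' n : ℕ, (-1 : ℝ) ^ n / (2 * n + 1) ^ 2



noncomputable def LpS (N : ℕ) : ℝ := ∑ k ∈ Finset.range N, (-1:ℝ)^k/(2*(k:ℝ)+1)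
noncomputable def fp (N : ℕ) (x : ℝ) : ℝ := ∑ k ∈ Finset.range N, x^k/(2*(k:ℝ)+1)
noncomputable def hp (N : ℕ) (t : ℝ) : ℝ := ∑ k ∈ Finset.range N, t^(2*k+1)/(2*(k:ℝ)+1)

lemma LpS_succ (N : ℕ) : LpS (N+1) = LpS N + (-1:ℝ)^N/(2*(N:ℝ)+1) := Finset.sum_range_succ _ _

lemma lemA (N : ℕ) (x : ℝ) :
    (∑ n ∈ Finset.range N, (-1:ℝ)^(n+2) * LpS (n+1) * x^n) * (1+x)
      = fp N x - LpS N * (-x)^N := by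
  induction N with
  | zero => simp [fp, LpS]
  | succ N ih =>
    rw [Finset.sum_range_succ, add_mul, ih]
    have hfp : fp (N+1) x = fp N x + x^N/(2*(N:ℝ)+1) := Finset.sum_range_succ _ _
    rw [hfp, LpS_succ, pow_succ (-x) N, pow_add (-1:ℝ) N 2]
    rcases Nat.even_or_odd N with h | h
    · rw [h.neg_one_pow, h.neg_pow]
      ring
    · rw [h.neg_one_pow, h.neg_pow]
      ring

lemma lem1 (N : ℕ) :
    (∑ n ∈ Finset.Icc 1 N, ((-1 : ℝ) ^ (n + 1) / n) *
        ∑ k ∈ Finset.range n, (-1 : ℝ) ^ k / (2 * k + 1))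
      = ∫ x in (0:ℝ)..1, (fp N x - LpS N * (-x)^N)/(1+x) := by
  have h1 : ∀ n : ℕ, ((-1 : ℝ) ^ (n + 1) / n) *
        (∑ k ∈ Finset.range n, (-1 : ℝ) ^ k / (2 * k + 1))
      = (-1:ℝ)^(n+1) * LpS n * (1/(n:ℝ)) := by
    intro n; rw [LpS]; ring
  rw [Finset.sum_congr rfl fun n _ => h1 n]
  rw [← Finset.Ico_add_one_right_eq_Icc, Finset.sum_Ico_eq_sum_range]
  have h2 : ∀ i : ℕ, (-1:ℝ)^(1+i+1) * LpS (1+i) * (1/((1+i:ℕ):ℝ))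
      = ∫ x in (0:ℝ)..1, (-1:ℝ)^(i+2) * LpS (i+1) * x^i := by
    intro i
    rw [intervalIntegral.integral_const_mul, integral_pow]
    push_cast
    ring_nf
  rw [Finset.sum_congr rfl fun i _ => h2 i]
  rw [← intervalIntegral.integral_finset_sum (μ := MeasureTheory.volume)
    (f := fun i x => (-1:ℝ)^(i+2) * LpS (i+1) * x^i)
    (fun i _ => (Continuous.intervalIntegrable (by fun_prop) _ _))]
  apply intervalIntegral.integral_congr
  intro x hx
  rw [Set.uIcc_of_le (by norm_num : (0:ℝ) ≤ 1)] at hx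
  have hx1 : (1:ℝ) + x ≠ 0 := by nlinarith [hx.1]
  rw [eq_div_iff hx1, ← lemA N x]; simp

lemma hp_eq (N : ℕ) (t : ℝ) : hp N t = t * fp N (t^2) := by
  rw [hp, fp, Finset.mul_sum]
  refine Finset.sum_congr rfl fun k _ => ?_
  rw [← pow_mul, mul_div_assoc', pow_succ']

lemma hp_cont (N : ℕ) : Continuous (fun t : ℝ => 2 * hp N t / (1 + t^2)) := by
  apply Continuous.div (by unfold hp; fun_prop) (by fun_prop)
  intro t; positivity

lemma lem2a (N : ℕ) : (∫ x in (0:ℝ)..1, fp N x / (1+x))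
    = ∫ t in (0:ℝ)..1, 2 * hp N t / (1 + t^2) := by
  have himg : (fun t : ℝ => t^2) '' (Set.uIcc 0 1) ⊆ Set.Icc 0 1 := by
    rintro y ⟨t, ht, rfl⟩
    rw [Set.uIcc_of_le (by norm_num : (0:ℝ) ≤ 1)] at ht
    exact ⟨by positivity, by simp only []; nlinarith [ht.1, ht.2]⟩

  have hg : ContinuousOn (fun x : ℝ => fp N x / (1+x)) (Set.Icc 0 1) := by
    apply ContinuousOn.div (by unfold fp; fun_prop) (by fun_prop)
    intro x hx; have := hx.1; intro h; linarith
  have := intervalIntegral.integral_comp_smul_deriv' (a := (0:ℝ)) (b := 1)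
    (f := fun t => t^2) (f' := fun t => 2*t) (g := fun x => fp N x / (1+x))
    (fun t _ => by simpa using (hasDerivAt_pow 2 t)) (by fun_prop) (hg.mono himg)
  simp only [Function.comp] at this
  rw [show ((0:ℝ)^2) = 0 by norm_num, show ((1:ℝ)^2) = 1 by norm_num] at this
  rw [← this]
  apply intervalIntegral.integral_congr
  intro t _
  have h1 : (1:ℝ) + t^2 ≠ 0 := by positivity
  simp only [smul_eq_mul, hp_eq]
  field_simp

lemma lem2b (N : ℕ) : (∫ t in (0:ℝ)..1, 2 * hp N t / (1 + t^2))
    = ∫ u in (0:ℝ)..1, 2 * hp N ((1-u)/(1+u)) / (1 + u^2) := by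
  have hderiv : ∀ u ∈ Set.uIcc (0:ℝ) 1,
      HasDerivAt (fun u : ℝ => (1-u)/(1+u)) (-2/(1+u)^2) u := by
    intro u hu
    rw [Set.uIcc_of_le (by norm_num : (0:ℝ) ≤ 1)] at hu
    have h1 : (1:ℝ) + u ≠ 0 := by have := hu.1; intro h; linarith
    have := (HasDerivAt.div (by simpa using (hasDerivAt_id u).const_sub 1)
      (by simpa using (hasDerivAt_id u).const_add 1) h1)
    refine this.congr_deriv ?_
    ring
  have := intervalIntegral.integral_comp_smul_deriv (a := (0:ℝ)) (b := 1)
    (f := fun u => (1-u)/(1+u)) (f' := fun u => -2/(1+u)^2)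
    (g := fun t => 2 * hp N t / (1 + t^2))
    hderiv (ContinuousOn.div continuousOn_const (by fun_prop) (fun u hu => by
      rw [Set.uIcc_of_le (by norm_num : (0:ℝ) ≤ 1)] at hu
      have := hu.1; positivity)) (hp_cont N)
  simp only [Function.comp] at this
  norm_num at this
  rw [intervalIntegral.integral_symm 0 1] at this
  have h2 : (∫ t in (0:ℝ)..1, 2 * hp N t / (1 + t^2))
      = -∫ u in (0:ℝ)..1, (-2/(1+u)^2) * (2 * hp N ((1-u)/(1+u)) / (1 + ((1-u)/(1+u))^2)) := by
    linarith [this]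
  rw [h2, ← intervalIntegral.integral_neg]
  apply intervalIntegral.integral_congr
  intro u hu
  rw [Set.uIcc_of_le (by norm_num : (0:ℝ) ≤ 1)] at hu
  have h1 : (1:ℝ) + u ≠ 0 := by have := hu.1; intro h; linarith
  simp only [smul_eq_mul]
  have h3 : 1 + ((1-u)/(1+u))^2 = 2*(1+u^2)/(1+u)^2 := by field_simp; ring
  rw [h3]
  have h4 : (1:ℝ) + u^2 ≠ 0 := by positivity
  field_simp

/-- antiderivative of `u^(2m) * (-log u)` -/
noncomputable def Fm (m : ℕ) (u : ℝ) : ℝ :=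
  u^(2*m+1)/((2*(m:ℝ)+1)^2) - u^(2*m)*(u*Real.log u)/(2*(m:ℝ)+1)

lemma Fm_cont (m : ℕ) : Continuous (Fm m) := by
  unfold Fm
  exact (by fun_prop : Continuous fun u : ℝ => u^(2*m+1)/((2*(m:ℝ)+1)^2)).sub
    ((((continuous_pow (2*m)).mul Real.continuous_mul_log).div_const _))

lemma Fm_deriv (m : ℕ) {u : ℝ} (hu : 0 < u) :
    HasDerivAt (Fm m) (u^(2*m) * (-Real.log u)) u := by
  have h1 : HasDerivAt (fun u : ℝ => u^(2*m+1)) ((2*(m:ℝ)+1) * u^(2*m)) u := by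
    simpa using (hasDerivAt_pow (2*m+1) u)
  have h2 : HasDerivAt (fun u : ℝ => u^(2*m+1) * Real.log u)
      ((2*(m:ℝ)+1) * u^(2*m) * Real.log u + u^(2*m)) u := by
    have := h1.mul (Real.hasDerivAt_log hu.ne')
    refine this.congr_deriv ?_
    have : u^(2*m+1) * u⁻¹ = u^(2*m) := by
      rw [pow_succ]
      field_simp
    rw [← this]
  have h3 : HasDerivAt (Fm m)
      ((2*(m:ℝ)+1) * u^(2*m) / ((2*(m:ℝ)+1)^2)
        - ((2*(m:ℝ)+1) * u^(2*m) * Real.log u + u^(2*m)) / (2*(m:ℝ)+1)) u := by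
    have hFm : Fm m = fun u : ℝ =>
        u^(2*m+1)/((2*(m:ℝ)+1)^2) - u^(2*m+1) * Real.log u/(2*(m:ℝ)+1) := by
      funext v; unfold Fm; rw [pow_succ]; ring
    rw [hFm]
    exact (h1.div_const _).sub (h2.div_const _)
  convert h3 using 1
  have hm : (2*(m:ℝ)+1) ≠ 0 := by positivity
  field_simp
  ring

lemma pow_neg_log_nonneg {m : ℕ} {u : ℝ} (h0 : 0 < u) (h1 : u ≤ 1) :
    0 ≤ u^(2*m) * (-Real.log u) := by
  have := Real.log_nonpos h0.le h1
  have := pow_nonneg h0.le (2*m)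
  nlinarith

lemma intInt_pow_neg_log (m : ℕ) :
    IntervalIntegrable (fun u : ℝ => u^(2*m) * (-Real.log u)) volume 0 1 := by
  apply intervalIntegrable_deriv_of_nonneg ((Fm_cont m).continuousOn)
  · intro x hx
    simp only [min_def, max_def] at hx
    norm_num at hx
    exact Fm_deriv m hx.1
  · intro x hx
    simp only [min_def, max_def] at hx
    norm_num at hx
    exact pow_neg_log_nonneg hx.1 hx.2.le

lemma integral_pow_neg_log (m : ℕ) :
    ∫ u in (0:ℝ)..1, u^(2*m) * (-Real.log u) = 1/(2*(m:ℝ)+1)^2 := by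
  rw [integral_eq_sub_of_hasDeriv_right ((Fm_cont m).continuousOn)
    (fun x hx => by
      simp only [min_def, max_def] at hx
      norm_num at hx
      exact (Fm_deriv m hx.1).hasDerivWithinAt) (intInt_pow_neg_log m)]
  unfold Fm
  norm_num

noncomputable def Phi (u : ℝ) : ℝ := -Real.log u / (1 + u^2)
noncomputable def W (N : ℕ) (u : ℝ) : ℝ := 2 * hp N ((1-u)/(1+u)) / (1 + u^2)

lemma neglog_integrableOn : IntegrableOn (fun u : ℝ => -Real.log u) (Set.Ioo 0 1) volume := by
  have h := (intInt_pow_neg_log 0).1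
  simp only [Nat.mul_zero, pow_zero, one_mul] at h
  exact h.mono_set Set.Ioo_subset_Ioc_self

lemma Phi_integrableOn : IntegrableOn Phi (Set.Ioo 0 1) volume := by
  apply Integrable.mono (neglog_integrableOn)
  · exact (ContinuousOn.aestronglyMeasurable (by
      apply ContinuousOn.div
      · exact (ContinuousOn.log continuousOn_id (fun u hu => ne_of_gt hu.1)).neg
      · fun_prop
      · intro u _; positivity) measurableSet_Ioo)
  · rw [ae_restrict_iff' measurableSet_Ioo]
    filter_upwards with u hu
    have h0 := hu.1; have h1 := hu.2
    have hlog : 0 ≤ -Real.log u := by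
      have := Real.log_nonpos h0.le h1.le; linarith
    rw [Phi, Real.norm_eq_abs, Real.norm_eq_abs, abs_of_nonneg hlog,
      abs_of_nonneg (by positivity : (0:ℝ) ≤ -Real.log u / (1+u^2))]
    rw [div_le_iff₀ (by positivity)]
    nlinarith

lemma hp_continuous (N : ℕ) : Continuous (fun t => hp N t) := by
  unfold hp; exact continuous_finset_sum _ (fun k _ => by fun_prop)

lemma W_contOn (N : ℕ) : ContinuousOn (W N) (Set.Icc 0 1) := by
  unfold W
  apply ContinuousOn.div
  · apply ContinuousOn.mul continuousOn_const
    apply (hp_continuous N).comp_continuousOn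
    apply ContinuousOn.div (by fun_prop) (by fun_prop)
    intro u hu
    have := hu.1; intro h; linarith
  · fun_prop
  · intro u _; positivity

lemma W_integrableOn (N : ℕ) : IntegrableOn (W N) (Set.Ioo 0 1) volume :=
  ((W_contOn N).integrableOn_Icc).mono_set (Set.Ioo_subset_Icc_self)

lemma gmap {u : ℝ} (hu : u ∈ Set.Ioo (0:ℝ) 1) : (1-u)/(1+u) ∈ Set.Ioo (0:ℝ) 1 := by
  obtain ⟨h0, h1⟩ := hu
  constructor
  · apply div_pos <;> linarith
  · rw [div_lt_one (by linarith)]; linarith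

lemma W_mono {u : ℝ} (hu : u ∈ Set.Ioo (0:ℝ) 1) : Monotone fun N => W N u := by
  have ht := gmap hu
  apply monotone_nat_of_le_succ
  intro N
  unfold W hp
  rw [Finset.sum_range_succ]
  have h1 : (0:ℝ) ≤ ((1-u)/(1+u))^(2*N+1) / (2*(N:ℝ)+1) := by
    apply div_nonneg (pow_nonneg ht.1.le _) (by positivity)
  apply div_le_div_of_nonneg_right (by linarith) (by positivity)

lemma W_tendsto {u : ℝ} (hu : u ∈ Set.Ioo (0:ℝ) 1) :
    Tendsto (fun N => W N u) atTop (𝓝 (Phi u)) := by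
  have ht := gmap hu
  set t := (1-u)/(1+u) with htdef
  have habs : |t| < 1 := by rw [abs_of_nonneg ht.1.le]; exact ht.2
  have hs := (Real.hasSum_log_sub_log_of_abs_lt_one habs).tendsto_sum_nat
  have heq : ∀ N, (∑ k ∈ Finset.range N, (2:ℝ) * (1/(2*(k:ℝ)+1)) * t^(2*k+1)) = 2 * hp N t := by
    intro N
    rw [hp, Finset.mul_sum]
    exact Finset.sum_congr rfl fun k _ => by ring
  simp only [heq] at hs
  have hlog : Real.log (1+t) - Real.log (1-t) = -Real.log u := by
    have h1u : (0:ℝ) < 1 + u := by linarith [hu.1]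
    have e1 : 1 + t = 2/(1+u) := by rw [htdef]; field_simp; ring
    have e2 : 1 - t = 2*u/(1+u) := by rw [htdef]; field_simp; ring
    rw [e1, e2, Real.log_div (by norm_num) (ne_of_gt h1u),
      Real.log_div (mul_ne_zero two_ne_zero (ne_of_gt hu.1)) (ne_of_gt h1u),
      Real.log_mul two_ne_zero (ne_of_gt hu.1)]
    ring
  rw [hlog] at hs
  have := hs.div_const (1 + u^2)
  simpa only [W, Phi, div_eq_mul_inv, htdef] using this

lemma lem3 : Tendsto (fun N => ∫ u in (0:ℝ)..1, W N u) atTop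
    (𝓝 (∫ u in Set.Ioo (0:ℝ) 1, Phi u)) := by
  have key := integral_tendsto_of_tendsto_of_monotone
    (μ := volume.restrict (Set.Ioo (0:ℝ) 1)) (f := fun N u => W N u) (F := Phi)
    (fun N => W_integrableOn N) Phi_integrableOn
    (by rw [ae_restrict_iff' measurableSet_Ioo]; filter_upwards with u hu; exact W_mono hu)
    (by rw [ae_restrict_iff' measurableSet_Ioo]; filter_upwards with u hu; exact W_tendsto hu)
  have : ∀ N, (∫ u in (0:ℝ)..1, W N u) = ∫ u in Set.Ioo (0:ℝ) 1, W N u := by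
    intro N
    rw [integral_of_le (by norm_num : (0:ℝ) ≤ 1), integral_Ioc_eq_integral_Ioo]
  simpa only [this] using key

lemma pl_integrableOn (m : ℕ) :
    IntegrableOn (fun u : ℝ => u^(2*m) * (-Real.log u)) (Set.Ioo 0 1) volume :=
  ((intInt_pow_neg_log m).1).mono_set Set.Ioo_subset_Ioc_self

lemma pl_integral_Ioo (m : ℕ) :
    ∫ u in Set.Ioo (0:ℝ) 1, u^(2*m) * (-Real.log u) = 1/(2*(m:ℝ)+1)^2 := by
  rw [← integral_Ioc_eq_integral_Ioo, ← integral_of_le (by norm_num : (0:ℝ) ≤ 1)]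
  exact integral_pow_neg_log m

lemma qsum_eq (M : ℕ) {u : ℝ} (hu : u ∈ Set.Ioo (0:ℝ) 1) :
    Phi u - (∑ m ∈ Finset.range M, (-1:ℝ)^m * (u^(2*m) * (-Real.log u)))
      = (-Real.log u) * (-u^2)^M / (1+u^2) := by
  have hne : (-u^2 : ℝ) ≠ 1 := by nlinarith [hu.1]
  have hsum : (∑ m ∈ Finset.range M, (-u^2:ℝ)^m) = ((-u^2)^M - 1)/(-u^2 - 1) :=
    geom_sum_eq hne M
  have h1 : ∀ m : ℕ, (-1:ℝ)^m * (u^(2*m) * (-Real.log u)) = (-u^2)^m * (-Real.log u) := by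
    intro m
    rw [neg_pow, pow_mul]
    ring
  rw [Finset.sum_congr rfl fun m _ => h1 m, ← Finset.sum_mul, hsum, Phi]
  have h2 : (1:ℝ) + u^2 ≠ 0 := by positivity
  have h3 : (-u^2 - 1 : ℝ) ≠ 0 := by intro h; apply h2; linarith
  set A := ((-u^2:ℝ))^M with hA
  field_simp
  ring

lemma lem4 : (∫ u in Set.Ioo (0:ℝ) 1, Phi u)
    = ∑' n : ℕ, (-1 : ℝ) ^ n / (2 * (n:ℝ) + 1) ^ 2 := by
  have hsummable : Summable (fun n : ℕ => (-1 : ℝ) ^ n / (2 * (n:ℝ) + 1) ^ 2) := by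
    apply Summable.of_norm
    have h : ∀ n : ℕ, ‖(-1 : ℝ) ^ n / (2 * (n:ℝ) + 1) ^ 2‖ ≤ 1/((n:ℝ)+1)^2 := by
      intro n
      rw [norm_div, norm_pow, norm_neg, norm_one, one_pow, norm_pow, Real.norm_eq_abs,
        abs_of_pos (by positivity : (0:ℝ) < 2*(n:ℝ)+1)]
      apply one_div_le_one_div_of_le (by positivity)
      apply pow_le_pow_left₀ (by positivity)
      push_cast; linarith
    apply Summable.of_nonneg_of_le (fun n => norm_nonneg _) h
    simpa using (summable_nat_add_iff 1).mpr (Real.summable_one_div_nat_pow.mpr (by norm_num))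
  have hGM : Tendsto (fun M => ∑ m ∈ Finset.range M, (-1 : ℝ) ^ m / (2 * (m:ℝ) + 1) ^ 2)
      atTop (𝓝 (∑' n : ℕ, (-1 : ℝ) ^ n / (2 * (n:ℝ) + 1) ^ 2)) :=
    hsummable.hasSum.tendsto_sum_nat
  -- difference bound
  have hdiff : ∀ M : ℕ,
      ‖(∫ u in Set.Ioo (0:ℝ) 1, Phi u) - ∑ m ∈ Finset.range M, (-1 : ℝ) ^ m / (2 * (m:ℝ) + 1) ^ 2‖
        ≤ 1/(2*(M:ℝ)+1)^2 := by
    intro M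
    have hsint : IntegrableOn
        (fun u : ℝ => ∑ m ∈ Finset.range M, (-1:ℝ)^m * (u^(2*m) * (-Real.log u)))
        (Set.Ioo 0 1) volume :=
      MeasureTheory.integrable_finset_sum _ (fun m _ => ((pl_integrableOn m).const_mul _))
    have hGMi : (∑ m ∈ Finset.range M, (-1 : ℝ) ^ m / (2 * (m:ℝ) + 1) ^ 2)
        = ∫ u in Set.Ioo (0:ℝ) 1, ∑ m ∈ Finset.range M, (-1:ℝ)^m * (u^(2*m) * (-Real.log u)) := by
      rw [MeasureTheory.integral_finset_sum _ (fun m _ => ((pl_integrableOn m).const_mul _))]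
      refine Finset.sum_congr rfl fun m _ => ?_
      rw [MeasureTheory.integral_const_mul, pl_integral_Ioo m]
      ring
    rw [hGMi, ← MeasureTheory.integral_sub Phi_integrableOn hsint]
    have hb := MeasureTheory.norm_integral_le_of_norm_le
      (μ := volume.restrict (Set.Ioo (0:ℝ) 1))
      (f := fun u => Phi u - ∑ m ∈ Finset.range M, (-1:ℝ)^m * (u^(2*m) * (-Real.log u)))
      (g := fun u : ℝ => u^(2*M) * (-Real.log u))
      (pl_integrableOn M)
      (by
        rw [ae_restrict_iff' measurableSet_Ioo]
        filter_upwards with u hu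
        rw [qsum_eq M hu]
        have h0 := hu.1; have h1 := hu.2
        have hlog : 0 ≤ -Real.log u := by
          have := Real.log_nonpos h0.le h1.le; linarith
        rw [Real.norm_eq_abs, abs_div, abs_mul, abs_of_nonneg hlog,
          abs_of_pos (by positivity : (0:ℝ) < 1+u^2)]
        rw [div_le_iff₀ (by positivity)]
        have habs : |(-u^2 : ℝ)^M| = u^(2*M) := by
          rw [abs_pow, abs_neg, abs_of_nonneg (by positivity : (0:ℝ) ≤ u^2), ← pow_mul]
        rw [habs]
        nlinarith [mul_nonneg (mul_nonneg (pow_nonneg h0.le (2*M)) hlog) (sq_nonneg u)])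
    calc _ ≤ ∫ u in Set.Ioo (0:ℝ) 1, u^(2*M) * (-Real.log u) := hb
    _ = 1/(2*(M:ℝ)+1)^2 := pl_integral_Ioo M
  have hz : Tendsto (fun M : ℕ => (1:ℝ)/(2*(M:ℝ)+1)^2) atTop (𝓝 0) := by
    apply squeeze_zero (fun M => by positivity) (g := fun M : ℕ => 1/((M:ℝ)+1))
    · intro M
      apply one_div_le_one_div_of_le (by positivity)
      nlinarith [sq_nonneg (2*(M:ℝ)+1), (Nat.cast_nonneg M : (0:ℝ) ≤ M)]
    · exact tendsto_one_div_add_atTop_nhds_zero_nat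
  have := squeeze_zero_norm hdiff hz
  have h2 : Tendsto (fun M => (∫ u in Set.Ioo (0:ℝ) 1, Phi u)
      - ((∫ u in Set.Ioo (0:ℝ) 1, Phi u)
        - ∑ m ∈ Finset.range M, (-1 : ℝ) ^ m / (2 * (m:ℝ) + 1) ^ 2)) atTop
      (𝓝 ((∫ u in Set.Ioo (0:ℝ) 1, Phi u) - 0)) := (tendsto_const_nhds).sub this
  simp only [sub_sub_cancel, sub_zero] at h2
  exact tendsto_nhds_unique h2 hGM

lemma LpS_bound (N : ℕ) : ‖LpS N‖ ≤ 2 := by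
  have h1 : ∀ k : ℕ, (-1:ℝ)^k/(2*(k:ℝ)+1) = ∫ x in (0:ℝ)..1, (-x^2)^k := by
    intro k
    have : ∀ x : ℝ, (-x^2)^k = (-1:ℝ)^k * x^(2*k) := by
      intro x; rw [neg_pow, pow_mul]
    simp only [this]
    rw [intervalIntegral.integral_const_mul, integral_pow]
    push_cast
    norm_num
    ring
  rw [LpS, Finset.sum_congr rfl fun k _ => h1 k]
  rw [← intervalIntegral.integral_finset_sum (μ := volume) (f := fun k (x:ℝ) => (-x^2)^k)
    (fun k _ => (Continuous.intervalIntegrable (by fun_prop) _ _))]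
  have := intervalIntegral.norm_integral_le_of_norm_le_const (a := (0:ℝ)) (b := 1) (C := 2)
    (f := fun x => ∑ k ∈ Finset.range N, (-x^2)^k) ?_
  · simpa using this
  intro x hx
  rw [Set.uIoc_of_le (by norm_num : (0:ℝ) ≤ 1)] at hx
  have hne : (-x^2 : ℝ) ≠ 1 := by nlinarith [hx.1]
  rw [geom_sum_eq hne]
  have hd : (1:ℝ) ≤ |(-x^2 - 1)| := by
    rw [abs_of_nonpos (by nlinarith [sq_nonneg x])]
    nlinarith [sq_nonneg x]
  rw [Real.norm_eq_abs, abs_div]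
  have hn : |(-x^2:ℝ)^N - 1| ≤ 2 := by
    have h2 : |(-x^2:ℝ)^N| ≤ 1 := by
      rw [abs_pow, abs_neg, abs_of_nonneg (sq_nonneg x)]
      exact pow_le_one₀ (sq_nonneg x) (by nlinarith [hx.1, hx.2])
    calc |(-x^2:ℝ)^N - 1| ≤ |(-x^2:ℝ)^N| + 1 := by
          calc _ ≤ |(-x^2:ℝ)^N| + |(1:ℝ)| := abs_sub _ _
          _ = _ := by norm_num
    _ ≤ 2 := by linarith
  calc |(-x^2:ℝ)^N - 1| / |(-x^2 - 1)| ≤ |(-x^2:ℝ)^N - 1| / 1 :=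
        div_le_div_of_nonneg_left (abs_nonneg _) one_pos hd
  _ ≤ 2 := by rw [div_one]; exact hn

lemma E_bound (N : ℕ) : ‖∫ x in (0:ℝ)..1, (-x)^N/(1+x)‖ ≤ 1/((N:ℝ)+1) := by
  have hb := intervalIntegral.norm_integral_le_abs_of_norm_le (μ := volume) (a := (0:ℝ)) (b := 1)
    (f := fun x => (-x)^N/(1+x)) (g := fun x => x^N)
    (by
      rw [ae_restrict_iff' measurableSet_uIoc]
      filter_upwards with x hx
      rw [Set.uIoc_of_le (by norm_num : (0:ℝ) ≤ 1)] at hx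
      obtain ⟨h0, h1⟩ := hx
      rw [Real.norm_eq_abs, abs_div, abs_pow, abs_neg, abs_of_pos h0,
        abs_of_pos (by linarith : (0:ℝ) < 1+x)]
      calc x^N/(1+x) ≤ x^N/1 := by
            apply div_le_div_of_nonneg_left (pow_nonneg h0.le N) one_pos (by linarith)
      _ = x^N := by ring)
    (Continuous.intervalIntegrable (by fun_prop) _ _)
  rw [integral_pow] at hb
  calc ‖∫ x in (0:ℝ)..1, (-x)^N/(1+x)‖ ≤ |(1^(N+1) - 0^(N+1))/((N:ℝ)+1)| := hb
  _ ≤ 1/((N:ℝ)+1) := by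
      rw [one_pow, zero_pow (by omega), sub_zero, abs_of_pos (by positivity)]


/-- `G = ∑_{n=1}^∞ ((−1)^{n+1}/n) · ∑_{k=0}^{n−1} (−1)^k/(2k+1)`, the (conditionally
convergent) series being understood as the limit of its partial sums. -/
theorem stmt_6 :
    Tendsto
      (fun N : ℕ => ∑ n ∈ Finset.Icc 1 N, ((-1 : ℝ) ^ (n + 1) / n) *
        ∑ k ∈ Finset.range n, (-1 : ℝ) ^ k / (2 * k + 1))
      atTop (𝓝 catalanConstant) := by
  have hIcc : Set.uIcc (0:ℝ) 1 = Set.Icc 0 1 := Set.uIcc_of_le (by norm_num)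
  have hint1 : ∀ N : ℕ, IntervalIntegrable (fun x : ℝ => fp N x / (1+x)) volume 0 1 := by
    intro N
    apply ContinuousOn.intervalIntegrable
    rw [hIcc]
    apply ContinuousOn.div (by unfold fp; fun_prop) (by fun_prop)
    intro x hx
    have := hx.1; intro h; linarith
  have hint2 : ∀ N : ℕ, IntervalIntegrable (fun x : ℝ => (-x)^N / (1+x)) volume 0 1 := by
    intro N
    apply ContinuousOn.intervalIntegrable
    rw [hIcc]
    apply ContinuousOn.div (by fun_prop) (by fun_prop)
    intro x hx
    have := hx.1; intro h; linarith
  have key : ∀ N : ℕ,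
      (∑ n ∈ Finset.Icc 1 N, ((-1 : ℝ) ^ (n + 1) / n) *
        ∑ k ∈ Finset.range n, (-1 : ℝ) ^ k / (2 * k + 1))
      = (∫ u in (0:ℝ)..1, W N u) - LpS N * ∫ x in (0:ℝ)..1, (-x)^N/(1+x) := by
    intro N
    rw [lem1 N]
    have hsplit : (∫ x in (0:ℝ)..1, (fp N x - LpS N * (-x)^N)/(1+x))
        = (∫ x in (0:ℝ)..1, fp N x/(1+x)) - ∫ x in (0:ℝ)..1, LpS N * ((-x)^N/(1+x)) := by
      rw [← intervalIntegral.integral_sub (hint1 N) ((hint2 N).const_mul _)]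
      apply intervalIntegral.integral_congr
      intro x _
      simp only [sub_div, mul_div_assoc]
    rw [hsplit, intervalIntegral.integral_const_mul, lem2a N, lem2b N]
    rfl
  have h0 : Tendsto (fun N : ℕ => LpS N * ∫ x in (0:ℝ)..1, (-x)^N/(1+x)) atTop (𝓝 0) := by
    have hb : ∀ N : ℕ, ‖LpS N * ∫ x in (0:ℝ)..1, (-x)^N/(1+x)‖ ≤ 2 * (1/((N:ℝ)+1)) := by
      intro N
      rw [norm_mul]
      exact mul_le_mul (LpS_bound N) (E_bound N) (norm_nonneg _) (by norm_num)
    exact squeeze_zero_norm hb (by simpa using (tendsto_one_div_add_atTop_nhds_zero_nat (𝕜 := ℝ)).const_mul 2)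
  have hW : Tendsto (fun N => ∫ u in (0:ℝ)..1, W N u) atTop (𝓝 catalanConstant) := by
    have h := lem3
    rw [lem4] at h
    exact h
  have := hW.sub h0
  rw [sub_zero] at this
  exact this.congr (fun N => (key N).symm)
end

section
/- For every real z ≤ 0 and every positive integer n, the integrals I(z,n) = ∫₀^{1/2} qⁿ·ζ(z,q) dq satisfy the recursion I(z,n) = ( (2^{z−1} − 1) / (2ⁿ·(1−z)) )·ζ(z−1) − ( n/(1−z) )·I(z−1, n−1). -/
open MeasureTheory Real Complex

namespace Stmt7Aux
open HurwitzZeta Filter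

noncomputable def S (w : ℝ) (t : ℝ) : ℂ := ∑' n : ℕ, cexp (2 * π * I * t * n) / (n : ℂ) ^ (w : ℂ)

lemma norm_exp_two_pi (t : ℝ) (n : ℕ) : ‖cexp (2 * π * I * t * n)‖ = 1 := by
  have : (2 * ↑π * I * ↑t * ↑n : ℂ) = ((2 * π * t * n : ℝ) : ℂ) * I := by push_cast; ring
  rw [this]
  exact Complex.norm_exp_ofReal_mul_I _

lemma norm_term (w : ℝ) (hw : 0 < w) (t : ℝ) (n : ℕ) :
    ‖cexp (2 * π * I * t * n) / (n : ℂ) ^ (w : ℂ)‖ = (n : ℝ) ^ (-w) := by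
  rcases Nat.eq_zero_or_pos n with rfl | hn
  · simp [Complex.zero_cpow (by exact_mod_cast hw.ne' : (w : ℂ) ≠ 0),
      Real.zero_rpow (by linarith : -w ≠ 0)]
  · rw [norm_div, norm_exp_two_pi]
    rw [show ((n:ℂ)) = ((n:ℝ):ℂ) by push_cast; rfl]
    rw [Complex.norm_cpow_eq_rpow_re_of_pos (by exact_mod_cast hn)]
    rw [Complex.ofReal_re, Real.rpow_neg (Nat.cast_nonneg n), one_div]

lemma summable_rpow_neg {w : ℝ} (hw : 1 < w) : Summable (fun n : ℕ ↦ (n : ℝ) ^ (-w)) :=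
  Real.summable_nat_rpow.mpr (by linarith)

lemma summable_term (w : ℝ) (hw : 1 < w) (t : ℝ) :
    Summable (fun n : ℕ ↦ cexp (2 * π * I * t * n) / (n : ℂ) ^ (w : ℂ)) := by
  apply Summable.of_norm
  simp only [norm_term w (by linarith) t]
  exact summable_rpow_neg hw

lemma S_eq_expZeta (w : ℝ) (hw : 1 < w) (t : ℝ) : S w t = expZeta (↑t) (w : ℂ) :=
  (hasSum_expZeta_of_one_lt_re t (by simpa using hw)).tsum_eq

lemma coe_neg_unitAddCircle (t : ℝ) : ((-t : ℝ) : UnitAddCircle) = -((t : ℝ) : UnitAddCircle) :=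
  rfl

lemma rep (w : ℝ) (hw : 1 < w) (t : ℝ) :
    hurwitzZeta (↑t) (1 - (w : ℂ)) = (2 * π : ℂ) ^ (-(w:ℂ)) * Complex.Gamma (w:ℂ) *
      (cexp (-π * I * w / 2) * S w t + cexp (π * I * w / 2) * S w (-t)) := by
  have hs : ∀ n : ℕ, (w : ℂ) ≠ -n := by
    intro n h
    have := congrArg Complex.re h
    simp at this
    have : (0:ℝ) ≤ n := Nat.cast_nonneg n
    linarith [congrArg Complex.re h, this]
  have hs' : ((t : ℝ) : UnitAddCircle) ≠ 0 ∨ (w : ℂ) ≠ 1 := by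
    right
    intro h
    rw [show (1:ℂ) = ((1:ℝ):ℂ) by norm_num, Complex.ofReal_inj] at h
    linarith
  rw [hurwitzZeta_one_sub _ hs hs', S_eq_expZeta w hw, S_eq_expZeta w hw, coe_neg_unitAddCircle]

lemma norm_exp_sub_one (t : ℝ) : ‖cexp (2 * π * I * t) - 1‖ = 2 * |Real.sin (π * t)| := by
  have h1 : (2 * ↑π * I * ↑t : ℂ) = ((2 * π * t : ℝ) : ℂ) * I := by push_cast; ring
  rw [h1, Complex.exp_mul_I]
  have h2 : (Complex.cos (((2*π*t:ℝ):ℂ)) + Complex.sin (((2*π*t:ℝ):ℂ)) * I) - 1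
      = ((Real.cos (2*π*t) - 1 : ℝ) : ℂ) + ((Real.sin (2*π*t) : ℝ) : ℂ) * I := by
    rw [← Complex.ofReal_cos, ← Complex.ofReal_sin]
    push_cast
    ring
  rw [h2, Complex.norm_add_mul_I]
  have key : (Real.cos (2*π*t) - 1)^2 + Real.sin (2*π*t)^2 = (2 * |Real.sin (π * t)|)^2 := by
    have hc : Real.cos (2*π*t) = 1 - 2 * Real.sin (π*t)^2 := by
      rw [show 2*π*t = 2*(π*t) by ring, Real.cos_two_mul']
      nlinarith [Real.sin_sq_add_cos_sq (π*t)]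
    have hs2 : Real.sin (2*π*t) = 2 * Real.sin (π*t) * Real.cos (π*t) := by
      rw [show 2*π*t = 2*(π*t) by ring, Real.sin_two_mul]
    rw [hc, hs2, show (2*|Real.sin (π*t)|)^2 = 4 * Real.sin (π*t)^2 by
      rw [mul_pow, _root_.sq_abs]; ring]
    nlinarith [Real.sin_sq_add_cos_sq (π*t)]
  rw [key, Real.sqrt_sq (by positivity)]

lemma norm_S_le (w : ℝ) (hw : 1 < w) (t : ℝ) (h : Real.sin (π * t) ≠ 0) :
    ‖S w t‖ ≤ 1 / |Real.sin (π * t)| := by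
  set x : ℂ := cexp (2 * π * I * t) with hx
  have hxnorm : ‖x‖ = 1 := by
    have h1 : (2 * ↑π * I * ↑t : ℂ) = ((2 * π * t : ℝ) : ℂ) * I := by push_cast; ring
    rw [hx, h1]; exact Complex.norm_exp_ofReal_mul_I _
  have hxne : x ≠ 1 := by
    intro hx1
    have h2 := norm_exp_sub_one t
    rw [← hx, hx1, sub_self] at h2
    simp at h2
    exact h h2
  set B : ℝ := 1 / |Real.sin (π * t)| with hB
  have hBpos : 0 < B := by positivity
  have hgeom : ∀ N : ℕ, ‖∑ m ∈ Finset.range N, x ^ (m+1)‖ ≤ B := by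
    intro N
    have h3 : ∑ m ∈ Finset.range N, x ^ (m+1) = x * ((x ^ N - 1) / (x - 1)) := by
      rw [← geom_sum_eq hxne, Finset.mul_sum]
      exact Finset.sum_congr rfl fun i _ ↦ by ring
    rw [h3, norm_mul, hxnorm, one_mul, norm_div]
    have hnum : ‖x ^ N - 1‖ ≤ 2 := by
      calc ‖x ^ N - 1‖ ≤ ‖x ^ N‖ + ‖(1:ℂ)‖ := norm_sub_le _ _
      _ = 2 := by rw [norm_pow, hxnorm]; norm_num
    have hden : ‖x - 1‖ = 2 * |Real.sin (π * t)| := norm_exp_sub_one t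
    rw [hden, hB, div_le_div_iff₀ (by positivity) (by positivity)]
    nlinarith [abs_nonneg (Real.sin (π*t)), hnum]
  set f : ℕ → ℂ := fun n ↦ cexp (2 * π * I * t * n) / (n : ℂ) ^ (w : ℂ) with hf
  have hsum : Summable f := summable_term w hw t
  have hf0 : f 0 = 0 := by
    simp [hf, Complex.zero_cpow (by exact_mod_cast (by linarith : w ≠ 0) : (w:ℂ) ≠ 0)]
  set a : ℕ → ℝ := fun m ↦ ((m+1 : ℕ) : ℝ) ^ (-w) with ha
  have hfa : ∀ m : ℕ, f (m+1) = a m • x ^ (m+1) := by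
    intro m
    have hm : (0:ℝ) < ((m+1:ℕ):ℝ) := by positivity
    have hexp : cexp (2 * π * I * t * ((m+1:ℕ):ℂ)) = x ^ (m+1) := by
      rw [hx, ← Complex.exp_nat_mul]
      congr 1
      push_cast
      ring
    have hpow : ((m+1:ℕ) : ℂ) ^ (w:ℂ) = ((((m+1:ℕ):ℝ) ^ w : ℝ) : ℂ) := by
      rw [show ((m+1:ℕ):ℂ) = ((((m+1:ℕ):ℝ)):ℂ) by push_cast; ring]
      rw [Complex.ofReal_cpow hm.le]
    show cexp (2 * π * I * t * ((m+1:ℕ):ℂ)) / ((m+1:ℕ) : ℂ) ^ (w:ℂ) = a m • x ^ (m+1)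
    rw [hexp, hpow]
    simp only [ha, Complex.real_smul]
    rw [Real.rpow_neg hm.le, Complex.ofReal_inv]
    ring
  have hanonneg : ∀ m, 0 ≤ a m := fun m ↦ Real.rpow_nonneg (by positivity) _
  have hamono : ∀ m, a (m+1) ≤ a m := by
    intro m
    simp only [ha]
    have h1 : (0:ℝ) < ((m+1:ℕ):ℝ) := by positivity
    have h2 : ((m+1:ℕ):ℝ) ≤ ((m+1+1:ℕ):ℝ) := by push_cast; linarith
    rw [Real.rpow_neg h1.le, Real.rpow_neg (by positivity)]
    apply inv_anti₀ (Real.rpow_pos_of_pos h1 w)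
    exact Real.rpow_le_rpow h1.le h2 (by linarith)
  have ha0 : a 0 = 1 := by simp [ha]
  have hpartial : ∀ N : ℕ, ‖∑ m ∈ Finset.range N, f (m+1)‖ ≤ B := by
    intro N
    rcases Nat.eq_zero_or_pos N with rfl | hN
    · simpa using hBpos.le
    have hrw : ∑ m ∈ Finset.range N, f (m+1) = ∑ m ∈ Finset.range N, a m • x ^ (m+1) :=
      Finset.sum_congr rfl fun m _ ↦ hfa m
    rw [hrw, Finset.sum_range_by_parts]
    set G : ℕ → ℂ := fun k ↦ ∑ m ∈ Finset.range k, x ^ (m+1) with hG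
    have hGb : ∀ k, ‖G k‖ ≤ B := hgeom
    calc ‖a (N-1) • G N - ∑ i ∈ Finset.range (N-1), (a (i+1) - a i) • G (i+1)‖
        ≤ ‖a (N-1) • G N‖ + ‖∑ i ∈ Finset.range (N-1), (a (i+1) - a i) • G (i+1)‖ :=
          norm_sub_le _ _
      _ ≤ a (N-1) * B + ∑ i ∈ Finset.range (N-1), (a i - a (i+1)) * B := by
          gcongr
          · rw [norm_smul, Real.norm_eq_abs, _root_.abs_of_nonneg (hanonneg _)]
            exact mul_le_mul_of_nonneg_left (hGb N) (hanonneg _)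
          · calc ‖∑ i ∈ Finset.range (N-1), (a (i+1) - a i) • G (i+1)‖
                ≤ ∑ i ∈ Finset.range (N-1), ‖(a (i+1) - a i) • G (i+1)‖ :=
                  norm_sum_le _ _
              _ ≤ ∑ i ∈ Finset.range (N-1), (a i - a (i+1)) * B := by
                  apply Finset.sum_le_sum
                  intro i _
                  rw [norm_smul, Real.norm_eq_abs, _root_.abs_of_nonpos (by linarith [hamono i])]
                  rw [show -(a (i+1) - a i) = a i - a (i+1) by ring]
                  exact mul_le_mul_of_nonneg_left (hGb (i+1)) (by linarith [hamono i])
      _ = a (N-1) * B + (a 0 - a (N-1)) * B := by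
          rw [← Finset.sum_mul, Finset.sum_range_sub' a (N-1)]
      _ = B := by rw [ha0]; ring
  have h0 : HasSum f (S w t) := hsum.hasSum
  have hshift : HasSum (fun m ↦ f (m+1)) (S w t) := by
    refine (hasSum_nat_add_iff (f := f) 1).mpr ?_
    simpa [hf0] using h0
  have htend : Tendsto (fun N ↦ ‖∑ m ∈ Finset.range N, f (m+1)‖) atTop (nhds ‖S w t‖) :=
    (continuous_norm.tendsto _).comp hshift.tendsto_sum_nat
  exact le_of_tendsto htend (Filter.Eventually.of_forall hpartial)

lemma continuous_S (w : ℝ) (hw : 1 < w) : Continuous (S w) := by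
  apply continuous_tsum (u := fun n : ℕ ↦ (n:ℝ) ^ (-w))
  · intro n
    apply Continuous.div_const
    exact Complex.continuous_exp.comp
      (((continuous_const.mul Complex.continuous_ofReal).mul continuous_const))
  · exact summable_rpow_neg hw
  · intro n t
    exact le_of_eq (norm_term w (by linarith) t n)

noncomputable def K : ℝ := ∑' n : ℕ, (n:ℝ) ^ (-(2:ℝ))

lemma norm_S_le_K (w : ℝ) (hw : 2 ≤ w) (t : ℝ) : ‖S w t‖ ≤ K := by
  apply tsum_of_norm_bounded (summable_rpow_neg (by norm_num : (1:ℝ) < 2)).hasSum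
  intro n
  rw [norm_term w (by linarith) t n]
  rcases Nat.eq_zero_or_pos n with rfl | hn
  · simp [Real.zero_rpow (by linarith : -w ≠ 0), Real.zero_rpow (by norm_num : -(2:ℝ) ≠ 0)]
  · exact Real.rpow_le_rpow_of_exponent_le (by exact_mod_cast hn) (by linarith)

lemma gamma_le_one {w : ℝ} (h1 : 1 ≤ w) (h2 : w ≤ 2) : Real.Gamma w ≤ 1 := by
  have h := Real.convexOn_Gamma.2 (Set.mem_Ioi.mpr one_pos) (Set.mem_Ioi.mpr two_pos)
    (by linarith : (0:ℝ) ≤ 2 - w) (by linarith : (0:ℝ) ≤ w - 1) (by ring)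
  simp only [smul_eq_mul] at h
  rw [show (2 - w) * 1 + (w - 1) * 2 = w by ring] at h
  rw [Real.Gamma_one, Real.Gamma_two] at h
  linarith

lemma gamma_three : Real.Gamma 3 = 2 := by
  rw [show (3:ℝ) = ((2:ℕ):ℝ) + 1 by norm_num, Real.Gamma_nat_eq_factorial]
  norm_num [Nat.factorial]

lemma gamma_le_two {w : ℝ} (h1 : 2 ≤ w) (h2 : w ≤ 3) : Real.Gamma w ≤ 2 := by
  have h := Real.convexOn_Gamma.2 (Set.mem_Ioi.mpr two_pos) (Set.mem_Ioi.mpr (by norm_num : (0:ℝ) < 3))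
    (by linarith : (0:ℝ) ≤ 3 - w) (by linarith : (0:ℝ) ≤ w - 2) (by ring)
  simp only [smul_eq_mul] at h
  rw [show (3 - w) * 2 + (w - 2) * 3 = w by ring] at h
  rw [Real.Gamma_two, gamma_three] at h
  linarith

lemma hasDerivAt_S (w : ℝ) (hw : 2 < w) (t : ℝ) :
    HasDerivAt (S w) (2 * π * I * S (w-1) t) t := by
  have hwC : ((w:ℂ) - 1) ≠ 0 := by
    intro hcon
    have := congrArg Complex.re hcon
    simp at this
    linarith
  have key : HasDerivAt (fun u : ℝ ↦ ∑' n : ℕ, cexp (2 * π * I * u * n) / (n : ℂ) ^ (w : ℂ))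
      (∑' n : ℕ, cexp (2 * π * I * (t:ℝ) * n) * (2 * π * I * n) / (n : ℂ) ^ (w : ℂ)) t := by
    apply hasDerivAt_tsum (u := fun n : ℕ ↦ 2 * π * (n:ℝ) ^ (-(w-1)))
      (g' := fun (n : ℕ) (y : ℝ) ↦ cexp (2 * π * I * y * n) * (2 * π * I * n) / (n : ℂ) ^ (w : ℂ))
    · exact Summable.mul_left _ (summable_rpow_neg (by linarith))
    · intro n y
      have h1 : HasDerivAt (fun u : ℝ ↦ (2 * ↑π * I * ↑u * ↑n : ℂ)) (2 * π * I * n) y := by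
        simpa using ((Complex.ofRealCLM.hasDerivAt (x := y)).const_mul (2 * π * I)).mul_const (n:ℂ)
      exact (h1.cexp).div_const _
    · intro n y
      rw [norm_div, norm_mul, norm_exp_two_pi, one_mul]
      rcases Nat.eq_zero_or_pos n with rfl | hn
      · simp only [Nat.cast_zero, mul_zero, norm_zero, zero_div]
        positivity
      · have hnpos : (0:ℝ) < (n:ℝ) := by exact_mod_cast hn
        have hden : ‖(n : ℂ) ^ (w : ℂ)‖ = (n:ℝ) ^ w := by
          rw [show ((n:ℂ)) = ((n:ℝ):ℂ) by push_cast; rfl,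
            Complex.norm_cpow_eq_rpow_re_of_pos hnpos, Complex.ofReal_re]
        have hnum : ‖(2 * ↑π * I * (n:ℂ))‖ = 2 * π * n := by
          simp [norm_mul, _root_.abs_of_nonneg Real.pi_pos.le]
        rw [hnum, hden]
        have hrw : 2 * π * (n:ℝ) ^ (-(w-1)) = 2 * π * (n:ℝ) / (n:ℝ) ^ w := by
          rw [show -(w-1) = 1 + -w by ring, Real.rpow_add hnpos, Real.rpow_one,
            Real.rpow_neg hnpos.le]
          ring
        rw [hrw]
    · exact summable_term w (by linarith) t
  have heq : ∑' n : ℕ, cexp (2 * π * I * (t:ℝ) * n) * (2 * π * I * n) / (n : ℂ) ^ (w : ℂ)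
      = 2 * π * I * S (w-1) t := by
    rw [S, ← tsum_mul_left]
    apply tsum_congr
    intro n
    rcases Nat.eq_zero_or_pos n with rfl | hn
    · have h0 : ((0:ℕ):ℂ) ^ (((w-1:ℝ)):ℂ) = 0 := by
        rw [Nat.cast_zero]
        exact Complex.zero_cpow (by push_cast; exact hwC)
      simp [h0]
      exact hwC
    · have hne : ((n:ℂ)) ≠ 0 := by exact_mod_cast hn.ne'
      have hX : (n:ℂ) ^ (((w-1:ℝ)):ℂ) ≠ 0 := by
        rw [Ne, Complex.cpow_eq_zero_iff]
        tauto
      have hsplit : (n : ℂ) ^ (w : ℂ) = (n:ℂ) ^ (((w-1:ℝ)):ℂ) * (n:ℂ) ^ (1:ℂ) := by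
        rw [← Complex.cpow_add _ _ hne]
        norm_num
      rw [hsplit, Complex.cpow_one]
      rw [mul_comm ((n:ℂ) ^ (((w-1:ℝ)):ℂ)) ((n:ℂ)), ← div_div]
      have hcan : cexp (2 * π * I * (t:ℝ) * n) * (2 * ↑π * I * (n:ℂ)) / (n:ℂ)
          = 2 * ↑π * I * cexp (2 * π * I * (t:ℝ) * n) := by
        field_simp
      rw [hcan, mul_div_assoc]
  rw [← heq]
  exact key

lemma hasSum_zeta (w : ℝ) (hw : 1 < w) :
    HasSum (fun n : ℕ ↦ 1 / (n : ℂ) ^ (w : ℂ)) (riemannZeta (w : ℂ)) := by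
  have h := hasSum_hurwitzZeta_of_one_lt_re (a := (0:ℝ)) (s := (w:ℂ)) (by simp)
    (by simpa using hw)
  have h0 : (((0:ℝ) : UnitAddCircle)) = 0 := by norm_num
  rw [h0, hurwitzZeta_zero] at h
  simpa using h

lemma S_alt (w : ℝ) (hw : 1 < w) (t : ℝ) (ht : cexp (2 * π * I * t) = -1) :
    S w t = ((2:ℂ) ^ (1 - (w:ℂ)) - 1) * riemannZeta (w:ℂ) := by
  have hz := hasSum_zeta w hw
  have h2w : ((2:ℂ) ^ (-(w:ℂ))) ≠ 0 := by
    rw [Ne, Complex.cpow_eq_zero_iff]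
    norm_num
  -- even part
  have hEvenComp : HasSum (fun k : ℕ ↦ 1 / (((2*k : ℕ)) : ℂ) ^ (w : ℂ))
      ((2:ℂ) ^ (-(w:ℂ)) * riemannZeta (w:ℂ)) := by
    refine (hz.mul_left ((2:ℂ) ^ (-(w:ℂ)))).congr_fun fun k ↦ ?_
    rcases Nat.eq_zero_or_pos k with rfl | hk
    · simp [Complex.zero_cpow (show (w:ℂ) ≠ 0 by exact_mod_cast (by linarith : w ≠ 0))]
    · have hmul := Complex.mul_cpow_ofReal_nonneg (show (0:ℝ) ≤ 2 by norm_num)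
        (Nat.cast_nonneg k) (w:ℂ)
      have hsplit : (((2*k : ℕ)) : ℂ) ^ (w : ℂ) = (2:ℂ) ^ (w:ℂ) * (k:ℂ) ^ (w:ℂ) := by
        rw [show (((2*k : ℕ)) : ℂ) = (((2:ℝ)):ℂ) * (((k:ℝ)):ℂ) by push_cast; ring, hmul]
        norm_num
      rw [hsplit, Complex.cpow_neg]
      have h2 : ((2:ℂ) ^ (w:ℂ)) ≠ 0 := by
        rw [Ne, Complex.cpow_eq_zero_iff]; norm_num
      field_simp
  have hind : HasSum (fun m : ℕ ↦ if Even m then 1 / (m : ℂ) ^ (w : ℂ) else 0)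
      ((2:ℂ) ^ (-(w:ℂ)) * riemannZeta (w:ℂ)) := by
    have hinj : Function.Injective (fun k : ℕ ↦ 2 * k) := fun a b h ↦ by simp only [] at h; omega
    refine (Function.Injective.hasSum_iff hinj ?_).mp ?_
    · intro m hm
      have : ¬ Even m := by
        rintro ⟨r, hr⟩
        exact hm ⟨r, by show 2*r = m; omega⟩
      simp [this]
    · refine hEvenComp.congr_fun fun k ↦ ?_
      simp [Function.comp, even_two_mul]
  have halt : HasSum (fun m : ℕ ↦ (-1:ℂ)^m * (1 / (m : ℂ) ^ (w : ℂ)))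
      (2 * ((2:ℂ) ^ (-(w:ℂ)) * riemannZeta (w:ℂ)) - riemannZeta (w:ℂ)) := by
    refine ((hind.mul_left 2).sub hz).congr_fun fun m ↦ ?_
    rcases Nat.even_or_odd m with hm | hm
    · rw [if_pos hm, hm.neg_one_pow]; ring
    · rw [if_neg (by simpa using hm), hm.neg_one_pow]; ring
  have hterm : ∀ n : ℕ, cexp (2 * π * I * t * n) / (n : ℂ) ^ (w : ℂ)
      = (-1:ℂ)^n * (1 / (n : ℂ) ^ (w : ℂ)) := by
    intro n
    have : cexp (2 * π * I * t * n) = (-1:ℂ)^n := by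
      rw [show (2 * ↑π * I * ↑t * (n:ℂ)) = (n:ℂ) * (2 * ↑π * I * ↑t) by ring,
        Complex.exp_nat_mul, ht]
    rw [this]
    ring
  have : HasSum (fun n : ℕ ↦ cexp (2 * π * I * t * n) / (n : ℂ) ^ (w : ℂ))
      (2 * ((2:ℂ) ^ (-(w:ℂ)) * riemannZeta (w:ℂ)) - riemannZeta (w:ℂ)) :=
    halt.congr_fun fun n ↦ hterm n
  rw [S, this.tsum_eq]
  have h2pow : (2:ℂ) ^ (1 - (w:ℂ)) = 2 * (2:ℂ) ^ (-(w:ℂ)) := by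
    rw [show (1 - (w:ℂ)) = 1 + (-(w:ℂ)) by ring, Complex.cpow_add _ _ (by norm_num : (2:ℂ) ≠ 0),
      Complex.cpow_one]
  rw [h2pow]
  ring

lemma exp_pi_I_half : cexp (π * I / 2) = I := by
  rw [show (↑π * I / 2 : ℂ) = (↑(π/2) : ℂ) * I by push_cast; ring, Complex.exp_mul_I,
    ← Complex.ofReal_cos, ← Complex.ofReal_sin, Real.cos_pi_div_two, Real.sin_pi_div_two]
  simp

lemma exp_neg_pi_I_half : cexp (-(π * I) / 2) = -I := by
  rw [show (-(↑π * I) / 2 : ℂ) = (↑(-(π/2)) : ℂ) * I by push_cast; ring, Complex.exp_mul_I,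
    ← Complex.ofReal_cos, ← Complex.ofReal_sin, Real.cos_neg, Real.sin_neg,
    Real.cos_pi_div_two, Real.sin_pi_div_two]
  simp

lemma two_pi_ne : (2 * π : ℂ) ≠ 0 := by
  simp [Real.pi_ne_zero]

lemma coeff_neg (w : ℝ) (hw : 0 < w) :
    (2*π:ℂ)^(-(((w+1:ℝ)):ℂ)) * Complex.Gamma (((w+1:ℝ)):ℂ) * cexp (-π*I*((w+1:ℝ):ℂ)/2) * (2*π*I)
    = (w:ℂ) * ((2*π:ℂ)^(-(w:ℂ)) * Complex.Gamma (w:ℂ) * cexp (-π*I*(w:ℂ)/2)) := by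
  have hcast : (((w+1:ℝ)):ℂ) = (w:ℂ) + 1 := by push_cast; ring
  rw [hcast, Complex.Gamma_add_one _ (Complex.ofReal_ne_zero.mpr hw.ne')]
  rw [show (-((w:ℂ)+1)) = (-(w:ℂ)) + (-1) by ring,
    Complex.cpow_add _ _ two_pi_ne, Complex.cpow_neg_one]
  rw [show (-↑π*I*((w:ℂ)+1)/2) = (-↑π*I*(w:ℂ)/2) + (-(↑π*I)/2) by ring,
    Complex.exp_add, exp_neg_pi_I_half]
  field_simp
  ring_nf
  have hpi : (π:ℂ) ≠ 0 := Complex.ofReal_ne_zero.mpr Real.pi_ne_zero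
  field_simp [hpi]
  linear_combination (-((w:ℂ) * Complex.Gamma (w:ℂ))) * Complex.I_sq

lemma coeff_pos (w : ℝ) (hw : 0 < w) :
    (2*π:ℂ)^(-(((w+1:ℝ)):ℂ)) * Complex.Gamma (((w+1:ℝ)):ℂ) * cexp (π*I*((w+1:ℝ):ℂ)/2) * (-(2*π*I))
    = (w:ℂ) * ((2*π:ℂ)^(-(w:ℂ)) * Complex.Gamma (w:ℂ) * cexp (π*I*(w:ℂ)/2)) := by
  have hcast : (((w+1:ℝ)):ℂ) = (w:ℂ) + 1 := by push_cast; ring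
  rw [hcast, Complex.Gamma_add_one _ (Complex.ofReal_ne_zero.mpr hw.ne')]
  rw [show (-((w:ℂ)+1)) = (-(w:ℂ)) + (-1) by ring,
    Complex.cpow_add _ _ two_pi_ne, Complex.cpow_neg_one]
  rw [show (↑π*I*((w:ℂ)+1)/2) = (↑π*I*(w:ℂ)/2) + ((↑π*I)/2) by ring,
    Complex.exp_add, exp_pi_I_half]
  field_simp
  ring_nf
  have hpi : (π:ℂ) ≠ 0 := Complex.ofReal_ne_zero.mpr Real.pi_ne_zero
  field_simp [hpi]
  linear_combination (-((w:ℂ) * Complex.Gamma (w:ℂ))) * Complex.I_sq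

lemma value_at_half (w : ℝ) (hw : 1 < w) :
    (2*π:ℂ)^(-(w:ℂ)) * Complex.Gamma (w:ℂ) *
      (cexp (-π*I*w/2) * S w (1/2) + cexp (π*I*w/2) * S w (-(1/2)))
    = ((2:ℂ)^(1-(w:ℂ)) - 1) * riemannZeta (1 - (w:ℂ)) := by
  have ht1 : cexp (2 * π * I * ((1/2:ℝ):ℂ)) = -1 := by
    rw [show (2 * ↑π * I * ((1/2:ℝ):ℂ)) = ↑π * I by push_cast; ring]
    exact Complex.exp_pi_mul_I
  have ht2 : cexp (2 * π * I * ((-(1/2):ℝ):ℂ)) = -1 := by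
    rw [show (2 * ↑π * I * ((-(1/2):ℝ):ℂ)) = -(↑π * I) by push_cast; ring, Complex.exp_neg,
      Complex.exp_pi_mul_I]
    norm_num
  have h1 := S_alt w hw (1/2) (by exact_mod_cast ht1)
  have h2 := S_alt w hw (-(1/2)) (by exact_mod_cast ht2)
  rw [h1, h2]
  have hzeta := riemannZeta_one_sub (s := (w:ℂ))
    (fun n ↦ by
      intro hcon
      have := congrArg Complex.re hcon
      simp at this
      have h0 : (0:ℝ) ≤ n := Nat.cast_nonneg n
      linarith)
    (by
      intro hcon
      rw [show (1:ℂ) = ((1:ℝ):ℂ) by norm_num, Complex.ofReal_inj] at hcon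
      linarith)
  rw [hzeta]
  have hcos := Complex.two_cos (↑π * (w:ℂ) / 2)
  rw [show (↑π * (w:ℂ) / 2 * I) = ↑π * I * (w:ℂ) / 2 by ring,
    show (-(↑π * (w:ℂ) / 2) * I) = -↑π * I * (w:ℂ) / 2 by ring] at hcos
  have : cexp (-↑π*I*(w:ℂ)/2) + cexp (↑π*I*(w:ℂ)/2) = 2 * Complex.cos (↑π * (w:ℂ) / 2) := by
    rw [hcos]; ring
  calc (2*π:ℂ)^(-(w:ℂ)) * Complex.Gamma (w:ℂ) *
      (cexp (-π*I*w/2) * (((2:ℂ)^(1-(w:ℂ)) - 1) * riemannZeta (w:ℂ))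
        + cexp (π*I*w/2) * (((2:ℂ)^(1-(w:ℂ)) - 1) * riemannZeta (w:ℂ)))
      = (2*π:ℂ)^(-(w:ℂ)) * Complex.Gamma (w:ℂ) *
        ((cexp (-↑π*I*(w:ℂ)/2) + cexp (↑π*I*(w:ℂ)/2)) * (((2:ℂ)^(1-(w:ℂ)) - 1) * riemannZeta (w:ℂ))) := by
        ring
    _ = ((2:ℂ)^(1-(w:ℂ)) - 1) *
        (2 * (2*π:ℂ)^(-(w:ℂ)) * Complex.Gamma (w:ℂ) * Complex.cos (↑π * (w:ℂ) / 2) * riemannZeta (w:ℂ)) := by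
        rw [this]; ring

theorem part1 (z : ℝ) (hz : z < 0) (n : ℕ) (hn : 0 < n) :
    (∫ q in (0:ℝ)..(1/2 : ℝ), (q : ℂ) ^ n * hurwitzZeta (↑q) ((z:ℝ):ℂ)) =
      ((((2 : ℝ) ^ (z - 1) - 1) : ℝ) : ℂ) / ((2 ^ n : ℕ) : ℂ) / ((1 - z : ℝ) : ℂ)
          * riemannZeta ((z : ℂ) - 1)
        - ((n : ℂ) / ((1 - z : ℝ) : ℂ)) *
            ∫ q in (0:ℝ)..(1/2 : ℝ), (q : ℂ) ^ (n - 1) * hurwitzZeta (↑q) ((z : ℂ) - 1) := by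
  set w : ℝ := 1 - z with hwdef
  have hw : 1 < w := by simp [hwdef]; linarith
  have hw1 : 1 < w + 1 := by linarith
  have hcastz : ((z:ℝ):ℂ) = 1 - (w:ℂ) := by rw [hwdef]; push_cast; ring
  have hcastz1 : (z:ℂ) - 1 = 1 - (((w+1:ℝ)):ℂ) := by rw [hwdef]; push_cast; ring
  set C1 : ℂ := (2*π:ℂ)^(-(((w+1:ℝ)):ℂ)) * Complex.Gamma (((w+1:ℝ)):ℂ) *
    cexp (-π*I*((w+1:ℝ):ℂ)/2) with hC1
  set C2 : ℂ := (2*π:ℂ)^(-(((w+1:ℝ)):ℂ)) * Complex.Gamma (((w+1:ℝ)):ℂ) *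
    cexp (π*I*((w+1:ℝ):ℂ)/2) with hC2
  have repF : ∀ q : ℝ, hurwitzZeta (↑q) ((z:ℂ) - 1) = C1 * S (w+1) q + C2 * S (w+1) (-q) := by
    intro q
    rw [hcastz1, rep (w+1) hw1 q, hC1, hC2]
    ring
  have repG : ∀ q : ℝ, hurwitzZeta (↑q) ((z:ℝ):ℂ) = (2*π:ℂ)^(-(w:ℂ)) * Complex.Gamma (w:ℂ) *
      (cexp (-π*I*w/2) * S w q + cexp (π*I*w/2) * S w (-q)) := by
    intro q
    rw [hcastz, rep w hw q]
  have hFderiv : ∀ q : ℝ, HasDerivAt (fun u : ℝ ↦ hurwitzZeta (↑u) ((z:ℂ) - 1))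
      ((1 - (z:ℂ)) * hurwitzZeta (↑q) ((z:ℝ):ℂ)) q := by
    intro q
    have hd1 : HasDerivAt (S (w+1)) (2*π*I * S w q) q := by
      have h := hasDerivAt_S (w+1) (by linarith) q
      rwa [show w+1-1 = w by ring] at h
    have hd2 : HasDerivAt (fun u : ℝ ↦ S (w+1) (-u)) (-(2*π*I * S w (-q))) q := by
      have h := hasDerivAt_S (w+1) (by linarith) (-q)
      rw [show w+1-1 = w by ring] at h
      have h2 := h.scomp q (hasDerivAt_neg' q)
      simp at h2
      exact h2
    have hcomb := (hd1.const_mul C1).add (hd2.const_mul C2)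
    have hFeq : (fun u : ℝ ↦ hurwitzZeta (↑u) ((z:ℂ) - 1))
        = fun u : ℝ ↦ C1 * S (w+1) u + C2 * S (w+1) (-u) := funext repF
    rw [hFeq]
    refine hcomb.congr_deriv ?_
    symm
    rw [show (1 - (z:ℂ)) = (w:ℂ) by rw [hwdef]; push_cast; ring, repG q]
    have e1 := coeff_neg w (by linarith)
    have e2 := coeff_pos w (by linarith)
    rw [hC1, hC2]
    linear_combination (S w q) * e1.symm + (S w (-q)) * e2.symm
  have hGcont : Continuous (fun q : ℝ ↦ hurwitzZeta (↑q) ((z:ℝ):ℂ)) := by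
    rw [funext repG]
    apply Continuous.mul continuous_const
    apply Continuous.add
    · exact continuous_const.mul (continuous_S w hw)
    · exact continuous_const.mul ((continuous_S w hw).comp continuous_neg)
  have hFcont : Continuous (fun q : ℝ ↦ hurwitzZeta (↑q) ((z:ℂ) - 1)) :=
    continuous_iff_continuousAt.mpr fun q ↦ (hFderiv q).continuousAt
  have hu : ∀ x : ℝ, HasDerivAt (fun q : ℝ ↦ (q:ℂ)^n) ((n:ℂ) * (x:ℂ)^(n-1)) x := by
    intro x
    have h := (hasDerivAt_pow n x).ofReal_comp
    push_cast at h
    exact h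
  have hIBP := intervalIntegral.integral_mul_deriv_eq_deriv_mul
    (u := fun q : ℝ ↦ (q:ℂ)^n) (u' := fun q : ℝ ↦ (n:ℂ) * (q:ℂ)^(n-1))
    (v := fun q : ℝ ↦ hurwitzZeta (↑q) ((z:ℂ) - 1))
    (v' := fun q : ℝ ↦ (1 - (z:ℂ)) * hurwitzZeta (↑q) ((z:ℝ):ℂ))
    (a := (0:ℝ)) (b := (1/2:ℝ))
    (fun x _ ↦ hu x) (fun x _ ↦ hFderiv x)
    ((continuous_const.mul ((Complex.continuous_ofReal.pow _))).intervalIntegrable _ _)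
    ((continuous_const.mul hGcont).intervalIntegrable _ _)
  beta_reduce at hIBP
  have hpull1 : (∫ q in (0:ℝ)..(1/2:ℝ), (q:ℂ)^n * ((1 - (z:ℂ)) * hurwitzZeta (↑q) ((z:ℝ):ℂ)))
      = (1 - (z:ℂ)) * ∫ q in (0:ℝ)..(1/2:ℝ), (q:ℂ)^n * hurwitzZeta (↑q) ((z:ℝ):ℂ) := by
    rw [← intervalIntegral.integral_const_mul]
    apply intervalIntegral.integral_congr
    intro x _
    ring
  have hpull2 : (∫ q in (0:ℝ)..(1/2:ℝ), ((n:ℂ) * (q:ℂ)^(n-1)) * hurwitzZeta (↑q) ((z:ℂ)-1))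
      = (n:ℂ) * ∫ q in (0:ℝ)..(1/2:ℝ), (q:ℂ)^(n-1) * hurwitzZeta (↑q) ((z:ℂ)-1) := by
    rw [← intervalIntegral.integral_const_mul]
    apply intervalIntegral.integral_congr
    intro x _
    ring
  rw [hpull1, hpull2] at hIBP
  rw [show ((0:ℝ):ℂ)^n = 0 from by rw [Complex.ofReal_zero]; exact zero_pow hn.ne',
    zero_mul, sub_zero] at hIBP
  -- value at 1/2
  have hval : hurwitzZeta (↑(1/2:ℝ)) ((z:ℂ) - 1)
      = ((((2 : ℝ) ^ (z - 1) - 1) : ℝ) : ℂ) * riemannZeta ((z : ℂ) - 1) := by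
    rw [hcastz1, rep (w+1) hw1 (1/2:ℝ), value_at_half (w+1) hw1]
    have hexp : (1 - (((w+1:ℝ)):ℂ)) = ((z - 1 : ℝ):ℂ) := by rw [hwdef]; push_cast; ring
    rw [hexp]
    have h2c : ((2:ℂ)) ^ (((z-1:ℝ)):ℂ) = ((((2:ℝ) ^ (z-1)):ℝ):ℂ) := by
      rw [show (2:ℂ) = ((2:ℝ):ℂ) by norm_num, ← Complex.ofReal_cpow (by norm_num : (0:ℝ) ≤ 2)]
    rw [h2c]
    push_cast
    ring_nf
  rw [hval] at hIBP
  -- final algebra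
  have h1z : ((1 - z:ℝ):ℂ) ≠ 0 := Complex.ofReal_ne_zero.mpr (by linarith)
  have h1z' : (1 - (z:ℂ)) = ((1 - z:ℝ):ℂ) := by push_cast; ring
  have h2n : (((2:ℕ)^n : ℕ):ℂ) ≠ 0 := by
    push_cast
    exact pow_ne_zero n two_ne_zero
  have hhalf : ((1/2:ℝ):ℂ)^n = ((((2:ℕ)^n : ℕ)):ℂ)⁻¹ := by
    push_cast
    rw [one_div, inv_pow]
  rw [h1z'] at hIBP
  apply mul_left_cancel₀ h1z
  rw [hIBP, hhalf, ← h1z']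
  rw [show ((1-z:ℝ):ℂ) = 1 - (z:ℂ) from h1z'.symm] at h1z
  field_simp

lemma norm_exp_eq_one (r : ℝ) (w : ℝ) : ‖cexp ((r:ℂ) * I * (w:ℂ) / 2)‖ = 1 := by
  rw [show ((r:ℂ) * I * (w:ℂ) / 2) = ((r * w / 2 : ℝ):ℂ) * I by push_cast; ring]
  exact Complex.norm_exp_ofReal_mul_I _

lemma norm_A_le_one (w : ℝ) (hw : 0 ≤ w) : ‖(2*π:ℂ)^(-(w:ℂ))‖ ≤ 1 := by
  rw [show ((2*π:ℂ)) = (((2*π:ℝ)):ℂ) by push_cast; rfl]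
  rw [Complex.norm_cpow_eq_rpow_re_of_pos (by positivity)]
  simp only [Complex.neg_re, Complex.ofReal_re]
  exact Real.rpow_le_one_of_one_le_of_nonpos (by nlinarith [Real.pi_gt_three]) (by linarith)

lemma norm_Gamma_eq (w : ℝ) (hw : 0 < w) : ‖Complex.Gamma (w:ℂ)‖ = Real.Gamma w := by
  rw [Complex.Gamma_ofReal, Complex.norm_real, Real.norm_eq_abs,
    _root_.abs_of_pos (Real.Gamma_pos_of_pos hw)]

lemma sin_pi_q_pos {q : ℝ} (hq0 : 0 < q) (hq : q ≤ 1/2) : 2 * q ≤ Real.sin (π * q) := by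
  have h := Real.mul_le_sin (x := π * q) (by positivity)
    (by nlinarith [Real.pi_pos])
  calc 2 * q = 2 / π * (π * q) := by field_simp
  _ ≤ Real.sin (π * q) := h

lemma bound1 (w : ℝ) (hw1 : 1 < w) (hw2 : w ≤ 2) {q : ℝ} (hq0 : 0 < q) (hq : q ≤ 1/2) :
    ‖hurwitzZeta (↑q) (1 - (w:ℂ))‖ ≤ 1 / q := by
  rw [rep w hw1 q]
  have hsin : 2 * q ≤ Real.sin (π * q) := sin_pi_q_pos hq0 hq
  have hsinpos : 0 < Real.sin (π * q) := by linarith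
  have hS1 : ‖S w q‖ ≤ 1 / (2 * q) := by
    refine (norm_S_le w hw1 q hsinpos.ne').trans ?_
    rw [_root_.abs_of_pos hsinpos]
    apply one_div_le_one_div_of_le (by positivity) hsin
  have hS2 : ‖S w (-q)‖ ≤ 1 / (2 * q) := by
    have hsneg : Real.sin (π * (-q)) = -Real.sin (π * q) := by
      rw [show π * (-q) = -(π * q) by ring, Real.sin_neg]
    refine (norm_S_le w hw1 (-q) (by rw [hsneg]; simpa using hsinpos.ne')).trans ?_
    rw [hsneg, abs_neg, _root_.abs_of_pos hsinpos]
    apply one_div_le_one_div_of_le (by positivity) hsin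
  calc ‖(2*π:ℂ)^(-(w:ℂ)) * Complex.Gamma (w:ℂ) *
        (cexp (-π*I*w/2) * S w q + cexp (π*I*w/2) * S w (-q))‖
      = ‖(2*π:ℂ)^(-(w:ℂ))‖ * ‖Complex.Gamma (w:ℂ)‖ *
        ‖cexp (-π*I*w/2) * S w q + cexp (π*I*w/2) * S w (-q)‖ := by
        rw [norm_mul, norm_mul]
    _ ≤ 1 * 1 * (1 / (2*q) + 1 / (2*q)) := by
        apply mul_le_mul
        · apply mul_le_mul (norm_A_le_one w (by linarith)) ?_ (norm_nonneg _) (by norm_num)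
          rw [norm_Gamma_eq w (by linarith)]
          exact gamma_le_one (by linarith) hw2
        · calc ‖cexp (-π*I*w/2) * S w q + cexp (π*I*w/2) * S w (-q)‖
              ≤ ‖cexp (-π*I*w/2) * S w q‖ + ‖cexp (π*I*w/2) * S w (-q)‖ := norm_add_le _ _
          _ ≤ 1 / (2*q) + 1 / (2*q) := by
              rw [norm_mul, norm_mul,
                show (-↑π*I*(w:ℂ)/2) = ((-π:ℝ):ℂ) * I * (w:ℂ) / 2 by push_cast; ring,
                show (↑π*I*(w:ℂ)/2) = ((π:ℝ):ℂ) * I * (w:ℂ) / 2 by push_cast; ring,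
                norm_exp_eq_one, norm_exp_eq_one, one_mul, one_mul]
              exact add_le_add hS1 hS2
        · positivity
        · norm_num
    _ = 1 / q := by
        rw [one_mul, one_mul, ← add_div,
          div_eq_div_iff (by positivity : (2*q:ℝ) ≠ 0) (by positivity : (q:ℝ) ≠ 0)]
        ring
  
lemma K_nonneg : 0 ≤ K := tsum_nonneg fun n ↦ Real.rpow_nonneg (Nat.cast_nonneg n) _

lemma bound2 (w : ℝ) (hw2 : 2 ≤ w) (hw3 : w ≤ 3) (q : ℝ) :
    ‖hurwitzZeta (↑q) (1 - (w:ℂ))‖ ≤ 4 * K := by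
  rw [rep w (by linarith) q]
  calc ‖(2*π:ℂ)^(-(w:ℂ)) * Complex.Gamma (w:ℂ) *
        (cexp (-π*I*w/2) * S w q + cexp (π*I*w/2) * S w (-q))‖
      = ‖(2*π:ℂ)^(-(w:ℂ))‖ * ‖Complex.Gamma (w:ℂ)‖ *
        ‖cexp (-π*I*w/2) * S w q + cexp (π*I*w/2) * S w (-q)‖ := by
        rw [norm_mul, norm_mul]
    _ ≤ 1 * 2 * (K + K) := by
        apply mul_le_mul
        · apply mul_le_mul (norm_A_le_one w (by linarith)) ?_ (norm_nonneg _) (by norm_num)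
          rw [norm_Gamma_eq w (by linarith)]
          exact gamma_le_two hw2 hw3
        · calc ‖cexp (-π*I*w/2) * S w q + cexp (π*I*w/2) * S w (-q)‖
              ≤ ‖cexp (-π*I*w/2) * S w q‖ + ‖cexp (π*I*w/2) * S w (-q)‖ := norm_add_le _ _
          _ ≤ K + K := by
              rw [norm_mul, norm_mul,
                show (-↑π*I*(w:ℂ)/2) = ((-π:ℝ):ℂ) * I * (w:ℂ) / 2 by push_cast; ring,
                show (↑π*I*(w:ℂ)/2) = ((π:ℝ):ℂ) * I * (w:ℂ) / 2 by push_cast; ring,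
                norm_exp_eq_one, norm_exp_eq_one, one_mul, one_mul]
              exact add_le_add (norm_S_le_K w hw2 q) (norm_S_le_K w hw2 (-q))
        · positivity
        · norm_num
    _ = 4 * K := by ring


lemma cont_hz (z : ℝ) (hz : z < 0) : Continuous (fun q : ℝ ↦ hurwitzZeta (↑q) ((z:ℝ):ℂ)) := by
  have hw : 1 < 1 - z := by linarith
  have hrepr : ∀ q : ℝ, hurwitzZeta (↑q) ((z:ℝ):ℂ)
      = (2*π:ℂ)^(-(((1-z:ℝ)):ℂ)) * Complex.Gamma (((1-z:ℝ)):ℂ) *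
        (cexp (-π*I*(((1-z:ℝ)):ℂ)/2) * S (1-z) q + cexp (π*I*(((1-z:ℝ)):ℂ)/2) * S (1-z) (-q)) := by
    intro q
    rw [show ((z:ℝ):ℂ) = 1 - (((1-z:ℝ)):ℂ) by push_cast; ring]
    exact rep (1-z) hw q
  rw [funext hrepr]
  apply Continuous.mul continuous_const
  exact ((continuous_const.mul (continuous_S (1-z) hw)).add
    (continuous_const.mul ((continuous_S (1-z) hw).comp continuous_neg)))

end Stmt7Aux

open Stmt7Aux HurwitzZeta Filter

/-- The Hurwitz zeta function `ζ(z,q)` (analytically continued in `z`). -/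
noncomputable def hzeta (z : ℂ) (q : ℝ) : ℂ := HurwitzZeta.hurwitzZeta (q : UnitAddCircle) z

theorem stmt_7 (z : ℝ) (hz : z ≤ 0) (n : ℕ) (hn : 0 < n) :
    (∫ q in (0:ℝ)..(1/2 : ℝ), (q : ℂ) ^ n * hzeta z q) =
      ((((2 : ℝ) ^ (z - 1) - 1) : ℝ) : ℂ) / ((2 ^ n : ℕ) : ℂ) / ((1 - z : ℝ) : ℂ)
          * riemannZeta ((z : ℂ) - 1)
        - ((n : ℂ) / ((1 - z : ℝ) : ℂ)) *
            ∫ q in (0:ℝ)..(1/2 : ℝ), (q : ℂ) ^ (n - 1) * hzeta ((z : ℂ) - 1) q := by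
  simp only [hzeta]
  rcases lt_or_eq_of_le hz with hlt | heq
  · exact part1 z hlt n hn
  · subst heq
    -- z = 0 : argue by continuity from the case z < 0
    set φ : ℕ → ℝ := fun k ↦ -(1 / ((k:ℝ) + 1)) with hφ
    have hφneg : ∀ k, φ k < 0 := by
      intro k
      simp only [hφ]
      have : (0:ℝ) < 1/((k:ℝ)+1) := by positivity
      linarith
    have hφge : ∀ k, -1 ≤ φ k := by
      intro k
      have h1 : (1:ℝ) / ((k:ℝ)+1) ≤ 1 := by
        rw [div_le_one (by positivity)]
        simp
      simp only [hφ]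
      linarith
    have hφlim : Filter.Tendsto φ atTop (nhds 0) := by
      rw [show (0:ℝ) = -0 by norm_num]
      exact (tendsto_one_div_add_atTop_nhds_zero_nat).neg
    have E : ∀ k, (∫ q in (0:ℝ)..(1/2 : ℝ), (q : ℂ) ^ n * hurwitzZeta (↑q) ((φ k : ℝ):ℂ)) =
        ((((2 : ℝ) ^ (φ k - 1) - 1) : ℝ) : ℂ) / ((2 ^ n : ℕ) : ℂ) / ((1 - φ k : ℝ) : ℂ)
          * riemannZeta ((φ k : ℂ) - 1)
        - (((n:ℕ) : ℂ) / ((1 - φ k : ℝ) : ℂ)) *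
            ∫ q in (0:ℝ)..(1/2 : ℝ), (q : ℂ) ^ (n - 1) * hurwitzZeta (↑q) ((φ k : ℂ) - 1) :=
      fun k ↦ part1 (φ k) (hφneg k) n hn
    have hle : (0:ℝ) ≤ 1/2 := by norm_num
    -- limit of the left-hand sides
    have stepA : Filter.Tendsto
        (fun k ↦ ∫ q in (0:ℝ)..(1/2 : ℝ), (q : ℂ) ^ n * hurwitzZeta (↑q) ((φ k : ℝ):ℂ)) atTop
        (nhds (∫ q in (0:ℝ)..(1/2 : ℝ), (q : ℂ) ^ n * hurwitzZeta (↑q) (((0:ℝ)):ℂ))) := by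
      simp only [intervalIntegral.integral_of_le hle]
      apply MeasureTheory.tendsto_integral_of_dominated_convergence
        (bound := fun q : ℝ ↦ (q:ℝ)^(n-1))
      · intro k
        exact (Continuous.aestronglyMeasurable (by
          exact (Complex.continuous_ofReal.pow n).mul (cont_hz (φ k) (hφneg k))))
      · rw [← MeasureTheory.IntegrableOn, ← intervalIntegrable_iff_integrableOn_Ioc_of_le hle]
        exact (continuous_pow (n-1)).intervalIntegrable _ _
      · intro k
        filter_upwards [MeasureTheory.ae_restrict_mem measurableSet_Ioc] with q hq
        obtain ⟨hq0, hq2⟩ := hq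
        have hcast : ((φ k : ℝ):ℂ) = 1 - (((1 - φ k:ℝ)):ℂ) := by push_cast; ring
        have hb := bound1 (1 - φ k) (by linarith [hφneg k]) (by linarith [hφge k]) hq0 hq2
        rw [← hcast] at hb
        rw [norm_mul, norm_pow, Complex.norm_real, Real.norm_eq_abs,
          _root_.abs_of_pos hq0]
        calc q^n * ‖hurwitzZeta (↑q) ((φ k : ℝ):ℂ)‖ ≤ q^n * (1/q) := by
              apply mul_le_mul_of_nonneg_left hb (by positivity)
          _ = q^(n-1) := by
              rw [show n = (n-1)+1 from (Nat.succ_pred_eq_of_pos hn).symm]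
              simp only [Nat.add_sub_cancel]
              field_simp [hq0.ne']
              ring
      · apply Filter.Eventually.of_forall
        intro q
        apply Filter.Tendsto.const_mul
        have hcont : ContinuousAt (hurwitzZeta (↑q : UnitAddCircle)) (((0:ℝ)):ℂ) := by
          apply (differentiableAt_hurwitzZeta (↑q : UnitAddCircle) ?_).continuousAt
          norm_num
        have hcast : Filter.Tendsto (fun k ↦ ((φ k : ℝ):ℂ)) atTop (nhds (((0:ℝ)):ℂ)) :=
          (Complex.continuous_ofReal.tendsto 0).comp hφlim
        exact hcont.tendsto.comp hcast
    -- limit of the second integrals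
    have stepC : Filter.Tendsto
        (fun k ↦ ∫ q in (0:ℝ)..(1/2 : ℝ), (q : ℂ) ^ (n-1) * hurwitzZeta (↑q) ((φ k : ℂ) - 1)) atTop
        (nhds (∫ q in (0:ℝ)..(1/2 : ℝ), (q : ℂ) ^ (n-1) * hurwitzZeta (↑q) (((0:ℝ):ℂ) - 1))) := by
      simp only [intervalIntegral.integral_of_le hle]
      apply MeasureTheory.tendsto_integral_of_dominated_convergence
        (bound := fun _ : ℝ ↦ 4 * K)
      · intro k
        apply Continuous.aestronglyMeasurable
        apply (Complex.continuous_ofReal.pow (n-1)).mul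
        have : ∀ q : ℝ, hurwitzZeta (↑q) ((φ k : ℂ) - 1)
            = hurwitzZeta (↑q) (((φ k - 1 : ℝ)):ℂ) := by
          intro q; congr 1; push_cast; ring
        rw [funext this]
        exact cont_hz (φ k - 1) (by linarith [hφneg k])
      · exact MeasureTheory.integrable_const _
      · intro k
        filter_upwards [MeasureTheory.ae_restrict_mem measurableSet_Ioc] with q hq
        obtain ⟨hq0, hq2⟩ := hq
        have hcast : ((φ k : ℂ) - 1) = 1 - (((2 - φ k:ℝ)):ℂ) := by push_cast; ring
        have hb := bound2 (2 - φ k) (by linarith [hφneg k]) (by linarith [hφge k]) q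
        rw [← hcast] at hb
        rw [norm_mul, norm_pow, Complex.norm_real, Real.norm_eq_abs,
          _root_.abs_of_pos hq0]
        calc q^(n-1) * ‖hurwitzZeta (↑q) ((φ k : ℂ) - 1)‖ ≤ 1 * (4 * K) := by
              apply mul_le_mul ?_ hb (norm_nonneg _) (by norm_num)
              calc q^(n-1) ≤ (1:ℝ)^(n-1) := by
                    apply pow_le_pow_left₀ hq0.le
                    linarith
                _ = 1 := one_pow _
          _ = 4 * K := one_mul _
      · apply Filter.Eventually.of_forall
        intro q
        apply Filter.Tendsto.const_mul
        have hcont : ContinuousAt (hurwitzZeta (↑q : UnitAddCircle)) (((0:ℝ):ℂ) - 1) := by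
          apply (differentiableAt_hurwitzZeta (↑q : UnitAddCircle) ?_).continuousAt
          intro hcon
          rw [show ((0:ℝ):ℂ) - 1 = -1 by norm_num] at hcon
          exact (by norm_num : (-1:ℂ) ≠ 1) hcon
        have hcast : Filter.Tendsto (fun k ↦ ((φ k : ℂ) - 1)) atTop (nhds (((0:ℝ):ℂ) - 1)) := by
          apply Filter.Tendsto.sub_const
          exact (Complex.continuous_ofReal.tendsto 0).comp hφlim
        exact hcont.tendsto.comp hcast
    -- limit of scalar coefficients
    have hone : Filter.Tendsto (fun k ↦ (((1 - φ k : ℝ)):ℂ)) atTop (nhds (((1 - 0 : ℝ)):ℂ)) := by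
      apply (Complex.continuous_ofReal.tendsto _).comp
      exact tendsto_const_nhds.sub hφlim
    have hone_ne : (((1 - 0 : ℝ)):ℂ) ≠ 0 := by norm_num
    have htwo : Filter.Tendsto (fun k ↦ ((((2:ℝ) ^ (φ k - 1) - 1 : ℝ)):ℂ)) atTop
        (nhds ((((2:ℝ) ^ ((0:ℝ) - 1) - 1 : ℝ)):ℂ)) := by
      apply (Complex.continuous_ofReal.tendsto _).comp
      apply Filter.Tendsto.sub_const
      apply (Real.continuousAt_const_rpow (by norm_num : (2:ℝ) ≠ 0)).tendsto.comp
      exact hφlim.sub_const 1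
    have hzeta : Filter.Tendsto (fun k ↦ riemannZeta ((φ k : ℂ) - 1)) atTop
        (nhds (riemannZeta (((0:ℝ):ℂ) - 1))) := by
      have hcont : ContinuousAt riemannZeta (((0:ℝ):ℂ) - 1) := by
        apply (differentiableAt_riemannZeta ?_).continuousAt
        intro hcon
        rw [show ((0:ℝ):ℂ) - 1 = -1 by norm_num] at hcon
        exact (by norm_num : (-1:ℂ) ≠ 1) hcon
      apply hcont.tendsto.comp
      apply Filter.Tendsto.sub_const
      exact (Complex.continuous_ofReal.tendsto 0).comp hφlim
    have stepB : Filter.Tendsto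
        (fun k ↦ ((((2 : ℝ) ^ (φ k - 1) - 1) : ℝ) : ℂ) / ((2 ^ n : ℕ) : ℂ) / ((1 - φ k : ℝ) : ℂ)
          * riemannZeta ((φ k : ℂ) - 1)
        - (((n:ℕ) : ℂ) / ((1 - φ k : ℝ) : ℂ)) *
            ∫ q in (0:ℝ)..(1/2 : ℝ), (q : ℂ) ^ (n - 1) * hurwitzZeta (↑q) ((φ k : ℂ) - 1)) atTop
        (nhds (((((2 : ℝ) ^ ((0:ℝ) - 1) - 1) : ℝ) : ℂ) / ((2 ^ n : ℕ) : ℂ) / ((1 - (0:ℝ) : ℝ) : ℂ)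
          * riemannZeta (((0:ℝ) : ℂ) - 1)
        - (((n:ℕ) : ℂ) / ((1 - (0:ℝ) : ℝ) : ℂ)) *
            ∫ q in (0:ℝ)..(1/2 : ℝ), (q : ℂ) ^ (n - 1) * hurwitzZeta (↑q) (((0:ℝ) : ℂ) - 1))) := by
      apply Filter.Tendsto.sub
      · exact (((htwo.div_const _).div hone hone_ne).mul hzeta)
      · exact (tendsto_const_nhds.div hone hone_ne).mul stepC
    have := tendsto_nhds_unique stepA (stepB.congr (fun k ↦ (E k).symm))
    exact this
end

section
/- Let n be a positive integer, let z be a real number with z ∉ {1, 2, …, n+1}, and let f : [0,1] → ℝ be n times continuously differentiable. Then ∫₀¹ f(q)·ζ_*(z,q) dq = −∑_{k=0}^{n−1} (−1)^k · f^{(k)}(1)/(1−z)_{k+1} + ∑_{k=0}^{n−1} (−1)^k · ( f^{(k)}(1) − f^{(k)}(0) )·ζ(z−k−1)/(1−z)_{k+1} + ( (−1)^n/(1−z)_n )·∫₀¹ f^{(n)}(q)·ζ_*(z−n,q) dq. -/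
open MeasureTheory Real Complex

/-- `ζ_*(z,q) := ζ(z,q+1) = ζ(z,q) − q^{−z}`. -/
noncomputable def hzetastar (z : ℂ) (q : ℝ) : ℂ := hzeta z q - (q : ℂ) ^ (-z)

namespace Stmt9

noncomputable def ee (n : ℕ) (s : ℂ) (q : ℝ) : ℂ := ((n + 1 + q : ℝ) : ℂ) ^ (-s)

noncomputable def cc (j : ℕ) (s : ℂ) : ℂ :=
  ((-1) ^ j / (j.factorial : ℂ)) * ∏ i ∈ Finset.range j, (s + i)

noncomputable def Rr (m : ℕ) (s : ℂ) (q : ℝ) (n : ℕ) : ℂ :=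
  ee n s q - ∑ j ∈ Finset.range m, cc j s * (q : ℂ) ^ j * ((n + 1 : ℝ) : ℂ) ^ (-s - j)

noncomputable def SS (m : ℕ) (s : ℂ) (q : ℝ) : ℂ := ∑' n, Rr m s q n

noncomputable def zr (w : ℂ) : ℂ := riemannZeta w - 1 / (w - 1) / Gammaℝ w

noncomputable def HQ (i : ℕ) (s : ℂ) : ℂ :=
  ((-1) ^ (i + 1) / ((i + 1).factorial : ℂ)) * (∏ k ∈ Finset.range i, (s + k)) *
    ((s + i) * zr (s + i + 1) + (Gammaℝ (s + i + 1))⁻¹)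

noncomputable def Zc (m : ℕ) (s : ℂ) (q : ℝ) : ℂ :=
  SS m s q + riemannZeta s + ∑ i ∈ Finset.range (m - 1), (q : ℂ) ^ (i + 1) * HQ i s

/-- derivative of `q ↦ (c+q)^w` for `c+q>0`. -/
lemma hasDerivAt_shift {c q : ℝ} (hc : 0 < c + q) (w : ℂ) :
    HasDerivAt (fun y : ℝ => ((c + y : ℝ) : ℂ) ^ w) (w * ((c + q : ℝ) : ℂ) ^ (w - 1)) q := by
  rcases eq_or_ne w 0 with rfl | hw
  · simp only [Complex.cpow_zero, zero_mul]
    exact hasDerivAt_const q 1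
  · have h1 : HasDerivAt (fun y : ℝ => ((y : ℂ) ^ ((w - 1) + 1) / ((w - 1) + 1)))
        (((c + q : ℝ) : ℂ) ^ (w - 1)) (c + q) :=
      hasDerivAt_ofReal_cpow_const' hc.ne' (by simpa using hw)
    have h2 : HasDerivAt (fun y : ℝ => ((y : ℂ) ^ w / w)) (((c + q : ℝ) : ℂ) ^ (w - 1)) (c + q) := by
      simpa using h1
    have h3 := (h2.const_mul w).comp_const_add c q
    have he : (fun y : ℝ => w * (((c + y : ℝ) : ℂ) ^ w / w)) = fun y : ℝ => ((c + y : ℝ) : ℂ) ^ w := by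
      funext y; rw [mul_div_cancel₀ _ hw]
    rw [he] at h3
    simpa [mul_comm] using h3

lemma continuousAt_shift {c q : ℝ} (hc : 0 < c + q) (w : ℂ) :
    ContinuousAt (fun y : ℝ => ((c + y : ℝ) : ℂ) ^ w) q :=
  (hasDerivAt_shift hc w).continuousAt

lemma cc_zero (s : ℂ) : cc 0 s = 1 := by simp [cc]

lemma cc_rec1 (j : ℕ) (s : ℂ) : cc (j + 1) s * (j + 1) = -s * cc j (s + 1) := by
  have h : ∏ i ∈ Finset.range (j + 1), (s + i) = (∏ i ∈ Finset.range j, (s + 1 + i)) * s := by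
    rw [Finset.prod_range_succ']
    push_cast; ring_nf
  simp only [cc, h, Nat.factorial_succ, pow_succ]
  push_cast
  have hfac : ((j.factorial : ℂ)) ≠ 0 := Nat.cast_ne_zero.2 j.factorial_ne_zero
  have hj1 : ((j : ℂ) + 1) ≠ 0 := by
    have := Nat.cast_ne_zero (R := ℂ).2 j.succ_ne_zero
    push_cast at this; exact this
  field_simp

lemma cc_rec2 (j : ℕ) (s : ℂ) : cc (j + 1) (s - 1) * (j + 1) = (1 - s) * cc j s := by
  have h := cc_rec1 j (s - 1)
  rw [sub_add_cancel] at h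
  rw [h]; ring

lemma HQ_rec (i : ℕ) (s : ℂ) : HQ (i + 1) (s - 1) * (i + 2) = (1 - s) * HQ i s := by
  have h : ∏ k ∈ Finset.range (i + 1), (s - 1 + k) = (∏ k ∈ Finset.range i, (s + k)) * (s - 1) := by
    rw [Finset.prod_range_succ']
    push_cast; ring_nf
  have harg1 : (s - 1 + (i + 1) : ℂ) = s + i := by push_cast; ring
  have harg2 : (s - 1 + (i + 1) + 1 : ℂ) = s + i + 1 := by push_cast; ring
  simp only [HQ, h, harg1, harg2]
  have hfac : (((i + 1).factorial : ℂ)) ≠ 0 := Nat.cast_ne_zero.2 (i + 1).factorial_ne_zero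
  have hi2 : ((i : ℂ) + 2) ≠ 0 := by
    have := Nat.cast_ne_zero (R := ℂ).2 (Nat.succ_ne_zero (i + 1))
    push_cast at this; rw [show ((i : ℂ) + 2) = (i : ℂ) + 1 + 1 by ring]; exact this
  have hfs : (((i + 2).factorial : ℂ)) = ((i + 1).factorial : ℂ) * ((i : ℂ) + 2) := by
    rw [show i + 2 = (i + 1) + 1 by ring, Nat.factorial_succ]
    push_cast; ring
  rw [show i + 1 + 1 = i + 2 by ring, hfs, pow_succ]
  field_simp
  push_cast
  ring

lemma HQ_zero_eval {s : ℂ} (hs : s ≠ 1) : HQ 0 (s - 1) = (1 - s) * riemannZeta s := by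
  have h1 : (s - 1) ≠ 0 := sub_ne_zero.2 hs
  have h2 : (s - 1) * (1 / (s - 1) / Gammaℝ s) = (Gammaℝ s)⁻¹ := by
    rw [div_div, one_div, mul_inv, ← mul_assoc, mul_inv_cancel₀ h1, one_mul]
  simp only [HQ, zr, Nat.cast_zero, Finset.range_zero, Finset.prod_empty, mul_one, add_zero,
    Nat.factorial_one, Nat.cast_one, pow_one, sub_add_cancel]
  rw [mul_sub, h2]
  norm_num
  ring

lemma Rr_zero {m : ℕ} (hm : 1 ≤ m) (s : ℂ) (n : ℕ) : Rr m s 0 n = 0 := by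
  obtain ⟨m, rfl⟩ : ∃ k, m = k + 1 := ⟨m - 1, (Nat.succ_pred_eq_of_pos hm).symm⟩
  simp only [Rr, ee, Complex.ofReal_zero, add_zero]
  rw [Finset.sum_range_succ' _ m]
  simp [cc_zero]

lemma Rr_hasDerivAt (m n : ℕ) (s : ℂ) {q : ℝ} (hq : 0 ≤ q) :
    HasDerivAt (fun t : ℝ => Rr (m + 1) s t n) (-s * Rr m (s + 1) q n) q := by
  have hc : 0 < ((n : ℝ) + 1) + q := by positivity
  have h1 : HasDerivAt (fun t : ℝ => ee n s t) (-s * ee n (s + 1) q) q := by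
    have h := hasDerivAt_shift (c := (n : ℝ) + 1) (q := q) hc (-s)
    have he : (-s) - 1 = -(s + 1) := by ring
    rw [he] at h
    simpa [ee] using h
  have h2 : ∀ j : ℕ, HasDerivAt
      (fun t : ℝ => cc j s * (t : ℂ) ^ j * ((n + 1 : ℝ) : ℂ) ^ (-s - j))
      (cc j s * ((j : ℂ) * (q : ℂ) ^ (j - 1)) * ((n + 1 : ℝ) : ℂ) ^ (-s - j)) q := by
    intro j
    have hp : HasDerivAt (fun t : ℝ => ((t : ℂ)) ^ j) ((j : ℂ) * (q : ℂ) ^ (j - 1)) q :=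
      (hasDerivAt_pow j ((q : ℝ) : ℂ)).comp_ofReal
    exact (hp.const_mul (cc j s)).mul_const _
  have h3 := HasDerivAt.fun_sum (u := Finset.range (m + 1)) (fun j _ => h2 j)
  have h4 := h1.sub h3
  have heq : -s * ee n (s + 1) q
      - ∑ j ∈ Finset.range (m + 1),
          cc j s * ((j : ℂ) * (q : ℂ) ^ (j - 1)) * ((n + 1 : ℝ) : ℂ) ^ (-s - j)
      = -s * Rr m (s + 1) q n := by
    rw [Finset.sum_range_succ']
    simp only [Nat.cast_zero, zero_mul, mul_zero, zero_mul, add_zero]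
    rw [Rr, mul_sub, Finset.mul_sum]
    congr 1
    refine Finset.sum_congr rfl fun j _ => ?_
    have hrec := cc_rec1 j s
    have hexp : -s - ((j : ℂ) + 1) = -(s + 1) - (j : ℂ) := by ring
    push_cast
    rw [hexp]
    linear_combination ((q : ℂ) ^ j * ((n : ℂ) + 1) ^ (-(s + 1) - (j : ℂ))) * hrec
  rw [heq] at h4
  exact h4

lemma Rr_continuousOn (m n : ℕ) (s : ℂ) : ContinuousOn (fun q : ℝ => Rr m s q n) (Set.Icc 0 1) := by
  intro q hq
  have hc : 0 < ((n : ℝ) + 1) + q := by have := hq.1; positivity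
  have h1 : ContinuousAt (fun q : ℝ => ee n s q) q := by
    have := continuousAt_shift (c := (n : ℝ) + 1) (q := q) hc (-s)
    simpa [ee] using this
  have h2 : Continuous (fun q : ℝ => ∑ j ∈ Finset.range m,
      cc j s * (q : ℂ) ^ j * ((n + 1 : ℝ) : ℂ) ^ (-s - j)) :=
    continuous_finset_sum _ fun j _ =>
      (continuous_const.mul (Complex.continuous_ofReal.pow j)).mul continuous_const
  exact (h1.sub h2.continuousAt).continuousWithinAt

lemma shift_rpow_le {a t σ : ℝ} (ha : 1 ≤ a) (ht0 : 0 ≤ t) (ht1 : t ≤ 1) :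
    (a + t) ^ (-σ) ≤ 2 ^ |σ| * a ^ (-σ) := by
  have ha0 : 0 < a := lt_of_lt_of_le one_pos ha
  have key : (a + t) ^ (-σ) = a ^ (-σ) * ((a + t) / a) ^ (-σ) := by
    rw [← Real.mul_rpow ha0.le (by positivity), mul_div_cancel₀ _ ha0.ne']
  have hr1 : 1 ≤ (a + t) / a := (one_le_div ha0).2 (by linarith)
  have hr2 : (a + t) / a ≤ 2 := by rw [div_le_iff₀ ha0]; linarith
  have hmain : ((a + t) / a) ^ (-σ) ≤ 2 ^ |σ| :=
    le_trans (Real.rpow_le_rpow_of_exponent_le hr1 (neg_le_abs σ))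
      (Real.rpow_le_rpow (by linarith) hr2 (abs_nonneg σ))
  rw [key, mul_comm]
  exact mul_le_mul_of_nonneg_right hmain (Real.rpow_nonneg ha0.le _)

lemma Rr_norm_le (m : ℕ) : ∀ (s : ℂ) (n : ℕ) {q : ℝ}, q ∈ Set.Icc (0:ℝ) 1 →
    ‖Rr m s q n‖ ≤ (∏ i ∈ Finset.range m, ‖s + i‖) * 2 ^ |s.re + m| * ((n : ℝ) + 1) ^ (-(s.re + m)) := by
  induction m with
  | zero =>
    intro s n q hq
    have h1 : Rr 0 s q n = ee n s q := by simp [Rr]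
    have hpos : (0:ℝ) < (n : ℝ) + 1 + q := by have := hq.1; positivity
    have h2 : ‖ee n s q‖ = ((n : ℝ) + 1 + q) ^ (-s).re := by
      rw [ee, Complex.norm_cpow_eq_rpow_re_of_pos hpos]
    rw [h1, h2]
    simp only [Finset.range_zero, Finset.prod_empty, one_mul, Nat.cast_zero, add_zero,
      Complex.neg_re]
    exact shift_rpow_le (by simp) hq.1 hq.2
  | succ m ih =>
    intro s n q hq
    have hderiv : ∀ t ∈ Set.uIcc (0:ℝ) q, HasDerivAt (fun t : ℝ => Rr (m + 1) s t n)
        (-s * Rr m (s + 1) t n) t := by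
      intro t ht
      rw [Set.uIcc_of_le hq.1] at ht
      exact Rr_hasDerivAt m n s ht.1
    have hsub : Set.uIcc (0:ℝ) q ⊆ Set.Icc 0 1 := by
      rw [Set.uIcc_of_le hq.1]; exact Set.Icc_subset_Icc le_rfl hq.2
    have hint : IntervalIntegrable (fun t : ℝ => -s * Rr m (s + 1) t n) volume 0 q :=
      (((Rr_continuousOn m n (s + 1)).mono hsub).const_smul (-s)).intervalIntegrable
    have hftc := intervalIntegral.integral_eq_sub_of_hasDerivAt hderiv hint
    rw [Rr_zero (Nat.le_add_left 1 m) s n, sub_zero] at hftc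
    set C := ‖s‖ * ((∏ i ∈ Finset.range m, ‖s + 1 + i‖) * 2 ^ |(s + 1).re + m|
        * ((n : ℝ) + 1) ^ (-((s + 1).re + m))) with hC
    have hbound : ‖Rr (m + 1) s q n‖ ≤ C * |q - 0| := by
      rw [← hftc]
      apply intervalIntegral.norm_integral_le_of_norm_le_const
      intro x hx
      have hx' : x ∈ Set.Icc (0:ℝ) 1 := hsub (Set.uIoc_subset_uIcc hx)
      rw [norm_mul, norm_neg]
      exact mul_le_mul_of_nonneg_left (ih (s + 1) n hx') (norm_nonneg s)
    have hCnn : 0 ≤ C := by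
      rw [hC]; positivity
    have hq1 : |q - 0| ≤ 1 := by
      rw [sub_zero, _root_.abs_of_nonneg hq.1]; exact hq.2
    have h2 : ‖Rr (m + 1) s q n‖ ≤ C := by
      calc ‖Rr (m + 1) s q n‖ ≤ C * |q - 0| := hbound
        _ ≤ C * 1 := mul_le_mul_of_nonneg_left hq1 hCnn
        _ = C := mul_one C
    refine h2.trans (le_of_eq ?_)
    rw [hC]
    have hprod : ∏ i ∈ Finset.range (m + 1), ‖s + i‖ = (∏ i ∈ Finset.range m, ‖s + 1 + i‖) * ‖s‖ := by
      rw [Finset.prod_range_succ']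
      simp only [Nat.cast_zero, add_zero]
      congr 1
      refine Finset.prod_congr rfl fun i _ => ?_
      congr 1
      push_cast; ring
    have hre : (s + 1).re + m = s.re + (m + 1 : ℕ) := by
      simp only [Complex.add_re, Complex.one_re]
      push_cast; ring
    rw [hprod, hre]
    ring

lemma summable_pow {σ : ℝ} (hσ : 1 < σ) : Summable (fun n : ℕ => ((n:ℝ) + 1) ^ (-σ)) := by
  have h : Summable (fun n : ℕ => ((n:ℝ)) ^ (-σ)) := by
    rw [Real.summable_nat_rpow]; linarith
  have h2 := (summable_nat_add_iff 1).2 h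
  refine h2.congr fun n => ?_
  push_cast; ring_nf

lemma Rr_summable {m : ℕ} {s : ℂ} (hs : 1 - m < s.re) {q : ℝ} (hq : q ∈ Set.Icc (0:ℝ) 1) :
    Summable (fun n => Rr m s q n) := by
  have hσ : 1 < s.re + m := by linarith
  apply Summable.of_norm
  apply Summable.of_nonneg_of_le (fun n => norm_nonneg _) (fun n => Rr_norm_le m s n hq)
  exact (summable_pow hσ).mul_left _

lemma hasSum_ee {q : ℝ} (hq : q ∈ Set.Icc (0:ℝ) 1) {s : ℂ} (hs : 1 < s.re) :
    HasSum (fun n => ee n s q) (hzetastar s q) := by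
  have h := HurwitzZeta.hasSum_hurwitzZeta_of_one_lt_re hq hs
  have h2 := (hasSum_nat_add_iff' (f := fun n : ℕ => 1 / ((n : ℂ) + q) ^ s) 1).2 h
  simp only [Finset.range_one, Finset.sum_singleton, Nat.cast_zero, zero_add] at h2
  have hfun : ∀ n : ℕ, 1 / (((n + 1 : ℕ) : ℂ) + q) ^ s = ee n s q := by
    intro n
    rw [ee, Complex.cpow_neg, one_div]
    congr 2
    push_cast; ring
  have hval : HurwitzZeta.hurwitzZeta (q : UnitAddCircle) s - 1 / (q : ℂ) ^ s = hzetastar s q := by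
    rw [hzetastar, hzeta, Complex.cpow_neg, one_div]
  rw [← hval]
  rw [funext hfun] at h2
  exact h2

lemma hasSum_zeta {w : ℂ} (hw : 1 < w.re) :
    HasSum (fun n : ℕ => ((n + 1 : ℝ) : ℂ) ^ (-w)) (riemannZeta w) := by
  have h := hasSum_ee (q := 0) ⟨le_refl 0, zero_le_one⟩ hw
  have hval : hzetastar w 0 = riemannZeta w := by
    rw [hzetastar, hzeta]
    have h0 : ((0 : ℝ) : UnitAddCircle) = 0 := by norm_num
    have hw0 : -w ≠ 0 := by
      intro hc
      rw [neg_eq_zero] at hc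
      rw [hc] at hw; simp at hw; linarith
    rw [h0, HurwitzZeta.hurwitzZeta_zero, Complex.ofReal_zero, Complex.zero_cpow hw0, sub_zero]
  rw [hval] at h
  refine h.congr_fun fun n => ?_
  rw [ee]
  norm_num

lemma HQ_eq {i : ℕ} {s : ℂ} (h : s + i ≠ 0) :
    HQ i s = cc (i + 1) s * riemannZeta (s + i + 1) := by
  have h2 : (s + i : ℂ) * (1 / (s + i + 1 - 1) / Gammaℝ (s + i + 1)) = (Gammaℝ (s + i + 1))⁻¹ := by
    rw [add_sub_cancel_right, div_div, one_div, mul_inv, ← mul_assoc, mul_inv_cancel₀ h, one_mul]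
  have hprod : ∏ k ∈ Finset.range (i + 1), (s + k) = (∏ k ∈ Finset.range i, (s + k)) * (s + i) :=
    Finset.prod_range_succ _ _
  rw [HQ, zr, mul_sub, h2, sub_add_cancel, cc, hprod]
  ring

lemma sum_cc_zeta {m : ℕ} (hm : 1 ≤ m) {s : ℂ} (hs : 1 < s.re) (q : ℝ) :
    ∑ j ∈ Finset.range m, cc j s * (q : ℂ) ^ j * riemannZeta (s + j)
      = riemannZeta s + ∑ i ∈ Finset.range (m - 1), (q : ℂ) ^ (i + 1) * HQ i s := by
  obtain ⟨k, rfl⟩ : ∃ k, m = k + 1 := ⟨m - 1, (Nat.succ_pred_eq_of_pos hm).symm⟩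
  rw [Finset.sum_range_succ', add_comm]
  simp only [Nat.add_sub_cancel]
  congr 1
  · simp [cc_zero]
  · refine Finset.sum_congr rfl fun i _ => ?_
    have hne : s + i ≠ 0 := by
      intro hc
      have := congrArg Complex.re hc
      simp only [Complex.add_re, Complex.natCast_re, Complex.zero_re] at this
      have : (0:ℝ) ≤ (i:ℝ) := Nat.cast_nonneg i
      linarith
    rw [HQ_eq hne]
    push_cast
    ring

lemma SS_eq {m : ℕ} {s : ℂ} (hs : 1 < s.re) {q : ℝ} (hq : q ∈ Set.Icc (0:ℝ) 1) :
    SS m s q = hzetastar s q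
      - ∑ j ∈ Finset.range m, cc j s * (q : ℂ) ^ j * riemannZeta (s + j) := by
  have h1 := hasSum_ee hq hs
  have h2 : HasSum (fun n : ℕ => ∑ j ∈ Finset.range m,
        cc j s * (q : ℂ) ^ j * ((n + 1 : ℝ) : ℂ) ^ (-s - j))
      (∑ j ∈ Finset.range m, cc j s * (q : ℂ) ^ j * riemannZeta (s + j)) := by
    apply hasSum_sum
    intro j _
    have hw : 1 < (s + j).re := by
      simp only [Complex.add_re, Complex.natCast_re]
      have : (0:ℝ) ≤ (j:ℝ) := Nat.cast_nonneg j
      linarith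
    have h3 := (hasSum_zeta hw).mul_left (cc j s * (q : ℂ) ^ j)
    have hfun : ∀ n : ℕ, cc j s * (q : ℂ) ^ j * ((n + 1 : ℝ) : ℂ) ^ (-(s + j))
        = cc j s * (q : ℂ) ^ j * ((n + 1 : ℝ) : ℂ) ^ (-s - j) := by
      intro n; congr 1; ring_nf
    rw [funext hfun] at h3
    exact h3
  exact (h1.sub h2).tsum_eq

lemma Zc_eq_conv {m : ℕ} (hm : 1 ≤ m) {s : ℂ} (hs : 1 < s.re) {q : ℝ}
    (hq : q ∈ Set.Icc (0:ℝ) 1) : hzetastar s q = Zc m s q := by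
  rw [Zc, SS_eq hs hq, sum_cc_zeta hm hs q]
  ring

lemma zr_diff : Differentiable ℂ zr := by
  intro w
  have hdiv : (fun w : ℂ => 1 / (w - 1) / Gammaℝ w)
      = fun w : ℂ => (w - 1)⁻¹ * (Gammaℝ w)⁻¹ := by
    funext w; rw [one_div, div_eq_mul_inv]
  by_cases h1 : w = 1
  · subst h1
    have := HurwitzZeta.differentiableAt_hurwitzZeta_sub_one_div 0
    simp only [HurwitzZeta.hurwitzZeta_zero] at this
    exact this
  · apply DifferentiableAt.sub (differentiableAt_riemannZeta h1)
    rw [hdiv]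
    exact (((differentiable_id.sub_const (1:ℂ)).differentiableAt).inv
      (sub_ne_zero.2 h1)).mul (Complex.differentiable_Gammaℝ_inv.differentiableAt)

lemma HQ_diff (i : ℕ) : Differentiable ℂ (fun s => HQ i s) := by
  have hinner : Differentiable ℂ (fun s : ℂ => s + (i : ℂ) + 1) :=
    (differentiable_id.add_const (i : ℂ)).add_const 1
  apply Differentiable.mul
  · exact (Differentiable.fun_finsetProd fun k _ => differentiable_id.add_const _).const_mul _
  · apply Differentiable.add
    · apply Differentiable.mul (differentiable_id.add_const _)
      have h := zr_diff.comp hinner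
      exact h
    · have h := Complex.differentiable_Gammaℝ_inv.comp hinner
      exact h

lemma Rr_diff_s (m n : ℕ) (q : ℝ) (hq : 0 ≤ q) :
    Differentiable ℂ (fun s => Rr m s q n) := by
  have hb1 : ((n + 1 + q : ℝ) : ℂ) ≠ 0 := by
    rw [Complex.ofReal_ne_zero]; positivity
  have hb2 : ((n + 1 : ℝ) : ℂ) ≠ 0 := by
    rw [Complex.ofReal_ne_zero]; positivity
  apply Differentiable.sub
  · exact differentiable_neg.const_cpow (Or.inl hb1)
  · apply Differentiable.fun_sum
    intro j _
    apply Differentiable.mul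
    · apply Differentiable.mul_const
      exact (Differentiable.fun_finsetProd fun k _ => differentiable_id.add_const _).const_mul _
    · exact (differentiable_neg.sub_const _).const_cpow (Or.inl hb2)

lemma SS_differentiableOn (m : ℕ) {q : ℝ} (hq : q ∈ Set.Icc (0:ℝ) 1) :
    DifferentiableOn ℂ (fun s => SS m s q) {s : ℂ | 1 - (m:ℝ) < s.re} := by
  set U := {s : ℂ | 1 - (m:ℝ) < s.re} with hUdef
  have hU : IsOpen U := isOpen_lt continuous_const Complex.continuous_re
  have hloc : TendstoLocallyUniformlyOn
      (fun (N : Finset ℕ) => fun s => ∑ n ∈ N, Rr m s q n)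
      (fun s => SS m s q) Filter.atTop U := by
    rw [tendstoLocallyUniformlyOn_iff_forall_isCompact hU]
    intro K hKU hK
    rcases K.eq_empty_or_nonempty with rfl | hKe
    · exact tendstoUniformlyOn_empty
    obtain ⟨s₀, hs₀K, hmin⟩ := hK.exists_isMinOn hKe Complex.continuous_re.continuousOn
    have hσ₀ : 1 - (m:ℝ) < s₀.re := hKU hs₀K
    obtain ⟨R, hRsub⟩ := hK.isBounded.subset_closedBall 0
    have hR : ∀ s ∈ K, ‖s‖ ≤ R := by
      intro s hs
      simpa [Metric.mem_closedBall, dist_eq_norm] using hRsub hs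
    have hR0 : 0 ≤ R := le_trans (norm_nonneg s₀) (hR s₀ hs₀K)
    have hσsum : 1 < s₀.re + m := by linarith
    apply tendstoUniformlyOn_tsum
      (hu := (summable_pow hσsum).mul_left ((R + m + 1) ^ m * 2 ^ (R + m + 1)))
    intro n s hsK
    refine le_trans (Rr_norm_le m s n hq) ?_
    have h1 : ∏ i ∈ Finset.range m, ‖s + i‖ ≤ (R + m + 1) ^ m := by
      rw [show ((R + m + 1) ^ m : ℝ) = ∏ i ∈ Finset.range m, (R + m + 1) by
        rw [Finset.prod_const, Finset.card_range]]
      apply Finset.prod_le_prod (fun i _ => norm_nonneg _)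
      intro i hi
      have hadd : ‖s + (i:ℂ)‖ ≤ ‖s‖ + ‖(i:ℂ)‖ := norm_add_le _ _
      have hni : ‖(i:ℂ)‖ = (i:ℝ) := Complex.norm_natCast i
      have him : (i:ℝ) ≤ m := by
        have := Finset.mem_range.1 hi
        exact_mod_cast this.le
      have hsR := hR s hsK
      rw [hni] at hadd
      linarith
    have h2 : (2:ℝ) ^ |s.re + m| ≤ 2 ^ (R + m + 1) := by
      apply Real.rpow_le_rpow_of_exponent_le one_le_two
      have : |s.re| ≤ ‖s‖ := Complex.abs_re_le_norm s
      have h3 := hR s hsK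
      calc |s.re + m| ≤ |s.re| + |(m:ℝ)| := abs_add_le _ _
        _ ≤ R + m + 1 := by
            rw [_root_.abs_of_nonneg (Nat.cast_nonneg (α := ℝ) m)]
            linarith
    have h3 : ((n:ℝ) + 1) ^ (-(s.re + m)) ≤ ((n:ℝ) + 1) ^ (-(s₀.re + m)) := by
      apply Real.rpow_le_rpow_of_exponent_le (by linarith [Nat.cast_nonneg (α := ℝ) n])
      have : s₀.re ≤ s.re := hmin hsK
      linarith
    calc (∏ i ∈ Finset.range m, ‖s + i‖) * 2 ^ |s.re + m| * ((n:ℝ) + 1) ^ (-(s.re + m))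
        ≤ (R + m + 1) ^ m * 2 ^ (R + m + 1) * ((n:ℝ) + 1) ^ (-(s₀.re + m)) := by
          apply mul_le_mul
          · apply mul_le_mul h1 h2 (Real.rpow_nonneg (by norm_num) _)
            positivity
          · exact h3
          · positivity
          · positivity
        _ = (R + m + 1) ^ m * 2 ^ (R + m + 1) * ((n:ℝ) + 1) ^ (-(s₀.re + m)) := rfl
  have hev : ∀ᶠ (N : Finset ℕ) in Filter.atTop,
      DifferentiableOn ℂ (fun s => ∑ n ∈ N, Rr m s q n) U :=
    Filter.Eventually.of_forall fun N =>
      (Differentiable.fun_sum fun n _ => Rr_diff_s m n q hq.1).differentiableOn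
  exact hloc.differentiableOn hev hU

lemma div_Gamma_diff : Differentiable ℂ (fun s : ℂ => 1 / (s - 1) / Gammaℝ s) → True := fun _ => trivial

lemma ML {m : ℕ} (hm : 1 ≤ m) {s : ℂ} (hs : 1 - (m:ℝ) < s.re) {q : ℝ}
    (hq : q ∈ Set.Ioc (0:ℝ) 1) : hzetastar s q = Zc m s q := by
  have hq' : q ∈ Set.Icc (0:ℝ) 1 := ⟨hq.1.le, hq.2⟩
  set U := {s : ℂ | 1 - (m:ℝ) < s.re} with hUdef
  have hU : IsOpen U := isOpen_lt continuous_const Complex.continuous_re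
  have hUconn : IsPreconnected U := (convex_halfSpace_re_gt _).isPreconnected
  set F := fun s : ℂ => hzetastar s q - 1 / (s - 1) / Gammaℝ s with hF
  set G := fun s : ℂ => SS m s q + (riemannZeta s - 1 / (s - 1) / Gammaℝ s)
      + ∑ i ∈ Finset.range (m - 1), (q : ℂ) ^ (i + 1) * HQ i s with hG
  have hqne : ((q : ℝ) : ℂ) ≠ 0 := by
    rw [Complex.ofReal_ne_zero]; exact hq.1.ne'
  have hcpow : Differentiable ℂ (fun s : ℂ => ((q : ℝ) : ℂ) ^ (-s)) :=
    differentiable_neg.const_cpow (Or.inl hqne)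
  have hdivd : ∀ w : ℂ, w ≠ 1 → DifferentiableAt ℂ (fun s : ℂ => 1 / (s - 1) / Gammaℝ s) w := by
    intro w hw
    have heq : (fun s : ℂ => 1 / (s - 1) / Gammaℝ s)
        = fun s : ℂ => (s - 1)⁻¹ * (Gammaℝ s)⁻¹ := by
      funext v; rw [one_div, div_eq_mul_inv]
    rw [heq]
    exact (((differentiable_id.sub_const (1:ℂ)).differentiableAt).inv
      (sub_ne_zero.2 hw)).mul (Complex.differentiable_Gammaℝ_inv.differentiableAt)
  have hFd : DifferentiableOn ℂ F U := by
    intro w hw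
    apply DifferentiableAt.differentiableWithinAt
    have hFeq : F = fun s => (HurwitzZeta.hurwitzZeta (q : UnitAddCircle) s
        - 1 / (s - 1) / Gammaℝ s) - ((q : ℝ) : ℂ) ^ (-s) := by
      funext v
      rw [hF]
      simp only [hzetastar, hzeta]
      ring
    rw [hFeq]
    by_cases h1 : w = 1
    · subst h1
      exact (HurwitzZeta.differentiableAt_hurwitzZeta_sub_one_div _).sub hcpow.differentiableAt
    · exact ((HurwitzZeta.differentiableAt_hurwitzZeta _ h1).sub (hdivd w h1)).sub
        hcpow.differentiableAt
  have hzd : ∀ w : ℂ, DifferentiableAt ℂ (fun s => riemannZeta s - 1 / (s - 1) / Gammaℝ s) w := by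
    intro w
    by_cases h1 : w = 1
    · subst h1
      have := HurwitzZeta.differentiableAt_hurwitzZeta_sub_one_div 0
      simpa only [HurwitzZeta.hurwitzZeta_zero] using this
    · exact (differentiableAt_riemannZeta h1).sub (hdivd w h1)
  have hGd : DifferentiableOn ℂ G U := by
    apply DifferentiableOn.add
    apply DifferentiableOn.add
    · exact SS_differentiableOn m hq'
    · exact fun w _ => (hzd w).differentiableWithinAt
    · exact (Differentiable.fun_sum fun i _ =>
        (HQ_diff i).const_mul _).differentiableOn
  have h2U : (2:ℂ) ∈ U := by
    simp only [hUdef, Set.mem_setOf_eq]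
    have : (1:ℝ) ≤ (m:ℝ) := by exact_mod_cast hm
    norm_num
    linarith
  have hopen1 : IsOpen {s : ℂ | 1 < s.re} := isOpen_lt continuous_const Complex.continuous_re
  have heq1 : Set.EqOn F G {s : ℂ | 1 < s.re} := by
    intro w hw
    have hzc := Zc_eq_conv hm hw hq'
    rw [Zc] at hzc
    simp only [hF, hG]
    linear_combination hzc
  have hev : F =ᶠ[nhds (2:ℂ)] G :=
    Filter.eventuallyEq_of_mem (hopen1.mem_nhds (by norm_num)) heq1
  have hEq := (hFd.analyticOnNhd hU).eqOn_of_preconnected_of_eventuallyEq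
    (hGd.analyticOnNhd hU) hUconn h2U hev
  have hws : s ∈ U := hs
  have := hEq hws
  simp only [hF, hG] at this
  rw [Zc]
  linear_combination this

lemma ee_continuousOn (n : ℕ) (s : ℂ) {b : ℝ} (hb : 0 ≤ b) :
    ContinuousOn (fun q => ee n s q) (Set.uIcc 0 b) := by
  intro q hq
  rw [Set.uIcc_of_le hb] at hq
  have hc : 0 < ((n:ℝ) + 1) + q := by have := hq.1; positivity
  exact ((continuousAt_shift hc (-s)).continuousWithinAt)

lemma integral_ee {s : ℂ} (hs1 : s ≠ 1) (n : ℕ) {b : ℝ} (hb : 0 ≤ b) :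
    ∫ q in (0:ℝ)..b, ee n s q
      = (((n + 1 + b : ℝ) : ℂ) ^ (1 - s) - ((n + 1 + 0 : ℝ) : ℂ) ^ (1 - s)) / (1 - s) := by
  have hne : (1 - s) ≠ 0 := sub_ne_zero.2 fun h => hs1 h.symm
  have hd : ∀ q ∈ Set.uIcc (0:ℝ) b, HasDerivAt
      (fun q : ℝ => ((n + 1 + q : ℝ) : ℂ) ^ (1 - s) / (1 - s)) (ee n s q) q := by
    intro q hq
    rw [Set.uIcc_of_le hb] at hq
    have hc : 0 < ((n:ℝ) + 1) + q := by have := hq.1; positivity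
    have h := (hasDerivAt_shift hc (1 - s)).div_const (1 - s)
    have he : ((1 : ℂ) - s - 1) = -s := by ring
    rw [he, mul_comm, mul_div_assoc, div_self hne, mul_one] at h
    exact h
  have hint : IntervalIntegrable (fun q => ee n s q) volume 0 b :=
    (ee_continuousOn n s hb).intervalIntegrable
  rw [intervalIntegral.integral_eq_sub_of_hasDerivAt hd hint, div_sub_div_same]

lemma integral_cpow_nat (j : ℕ) (b : ℝ) :
    ∫ q in (0:ℝ)..b, ((q : ℝ) : ℂ) ^ j = ((b : ℂ) ^ (j + 1)) / ((j : ℂ) + 1) := by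
  have h1 : (fun q : ℝ => ((q : ℝ) : ℂ) ^ j) = fun q : ℝ => (((q ^ j : ℝ)) : ℂ) := by
    funext q; push_cast; ring
  rw [h1, intervalIntegral.integral_ofReal, integral_pow]
  push_cast
  rw [zero_pow (Nat.succ_ne_zero j), sub_zero]

lemma integral_Rr {s : ℂ} (hs1 : s ≠ 1) (m n : ℕ) {b : ℝ} (hb : b ∈ Set.Icc (0:ℝ) 1) :
    ∫ q in (0:ℝ)..b, Rr m s q n = (1 / (1 - s)) * Rr (m + 1) (s - 1) b n := by
  have hne : (1 - s) ≠ 0 := sub_ne_zero.2 fun h => hs1 h.symm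
  have hintee : IntervalIntegrable (fun q => ee n s q) volume 0 b :=
    (ee_continuousOn n s hb.1).intervalIntegrable
  have hcsum : Continuous (fun q : ℝ => ∑ j ∈ Finset.range m,
      cc j s * (q : ℂ) ^ j * ((n + 1 : ℝ) : ℂ) ^ (-s - j)) :=
    continuous_finset_sum _ fun j _ =>
      (continuous_const.mul (Complex.continuous_ofReal.pow j)).mul continuous_const
  have hintsum : IntervalIntegrable (fun q : ℝ => ∑ j ∈ Finset.range m,
      cc j s * (q : ℂ) ^ j * ((n + 1 : ℝ) : ℂ) ^ (-s - j)) volume 0 b :=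
    hcsum.intervalIntegrable _ _
  have hsplit : ∫ q in (0:ℝ)..b, Rr m s q n
      = (∫ q in (0:ℝ)..b, ee n s q) - ∫ q in (0:ℝ)..b, ∑ j ∈ Finset.range m,
          cc j s * (q : ℂ) ^ j * ((n + 1 : ℝ) : ℂ) ^ (-s - j) := by
    rw [← intervalIntegral.integral_sub hintee hintsum]
    rfl
  have hsum : ∫ q in (0:ℝ)..b, ∑ j ∈ Finset.range m,
      cc j s * (q : ℂ) ^ j * ((n + 1 : ℝ) : ℂ) ^ (-s - j)
      = ∑ j ∈ Finset.range m,
          cc j s * ((b : ℂ) ^ (j + 1) / ((j : ℂ) + 1)) * ((n + 1 : ℝ) : ℂ) ^ (-s - j) := by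
    rw [intervalIntegral.integral_finset_sum
      (f := fun j (q : ℝ) => cc j s * (q : ℂ) ^ j * ((n + 1 : ℝ) : ℂ) ^ (-s - j)) (fun j _ =>
      ((continuous_const.mul (Complex.continuous_ofReal.pow j)).mul
        continuous_const).intervalIntegrable _ _)]
    refine Finset.sum_congr rfl fun j _ => ?_
    rw [intervalIntegral.integral_mul_const, intervalIntegral.integral_const_mul,
      integral_cpow_nat]
  rw [hsplit, hsum, integral_ee hs1 n hb.1]
  -- now pure algebra
  rw [Rr, Finset.sum_range_succ']
  have hee' : ee n (s - 1) b = ((n + 1 + b : ℝ) : ℂ) ^ (1 - s) := by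
    rw [ee]; congr 1; ring
  have h00 : cc 0 (s - 1) * (b : ℂ) ^ 0 * ((n + 1 : ℝ) : ℂ) ^ (-(s - 1) - (0 : ℕ))
      = ((n + 1 + 0 : ℝ) : ℂ) ^ (1 - s) := by
    rw [cc_zero, pow_zero, one_mul, one_mul]
    have hb0 : ((n + 1 + 0 : ℝ) : ℂ) = ((n + 1 : ℝ) : ℂ) := by norm_num
    rw [hb0]
    congr 1
    push_cast; ring
  rw [hee', h00]
  have hterm : ∀ j ∈ Finset.range m,
      (1 / (1 - s)) * (cc (j + 1) (s - 1) * (b : ℂ) ^ (j + 1)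
        * ((n + 1 : ℝ) : ℂ) ^ (-(s - 1) - ((j : ℕ) + 1 : ℕ)))
      = cc j s * ((b : ℂ) ^ (j + 1) / ((j : ℂ) + 1)) * ((n + 1 : ℝ) : ℂ) ^ (-s - j) := by
    intro j _
    have hexp : (-(s - 1) - ((j : ℕ) + 1 : ℕ) : ℂ) = -s - j := by push_cast; ring
    rw [hexp]
    have hrec := cc_rec2 j s
    have hj1 : ((j : ℂ) + 1) ≠ 0 := by
      have := Nat.cast_ne_zero (R := ℂ).2 j.succ_ne_zero
      push_cast at this; exact this
    push_cast
    field_simp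
    linear_combination ((b : ℂ) ^ (j + 1)) * hrec
  rw [mul_sub, mul_add, Finset.mul_sum, Finset.sum_congr rfl hterm]
  field_simp
  ring

lemma Zc_zero {m : ℕ} (hm : 1 ≤ m) (s : ℂ) : Zc m s 0 = riemannZeta s := by
  have h1 : SS m s 0 = 0 := by
    rw [SS]
    have : ∀ n : ℕ, Rr m s 0 n = 0 := Rr_zero hm s
    rw [funext this]
    exact tsum_zero
  rw [Zc, h1]
  simp

lemma SS_continuousOn {m : ℕ} {s : ℂ} (hs : 1 - (m:ℝ) < s.re) :
    ContinuousOn (fun q : ℝ => SS m s q) (Set.Icc 0 1) := by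
  have hσ : 1 < s.re + m := by linarith
  have hu : Summable (fun n : ℕ => (∏ i ∈ Finset.range m, ‖s + i‖) * 2 ^ |s.re + m|
        * (((n:ℝ) + 1) ^ (-(s.re + m)))) :=
    (summable_pow hσ).mul_left _
  have hbound : ∀ (n : ℕ) (x : ℝ), x ∈ Set.Icc (0:ℝ) 1 →
      ‖Rr m s x n‖ ≤ (∏ i ∈ Finset.range m, ‖s + i‖) * 2 ^ |s.re + m|
        * (((n:ℝ) + 1) ^ (-(s.re + m))) := fun n x hx => Rr_norm_le m s n hx
  have ht := tendstoUniformlyOn_tsum hu hbound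
  exact ht.continuousOn (Filter.Frequently.of_forall fun N =>
    continuousOn_finset_sum _ fun n _ => Rr_continuousOn m n s)

lemma Zc_continuousOn {m : ℕ} {s : ℂ} (hs : 1 - (m:ℝ) < s.re) :
    ContinuousOn (fun q : ℝ => Zc m s q) (Set.Icc 0 1) := by
  have hcS : ContinuousOn (fun q : ℝ => SS m s q) (Set.Icc 0 1) := SS_continuousOn hs
  apply ContinuousOn.add
  apply ContinuousOn.add
  · exact hcS
  · exact continuousOn_const
  · exact Continuous.continuousOn (continuous_finset_sum _ fun i _ =>
      (Complex.continuous_ofReal.pow _).mul continuous_const)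

lemma hzetastar_one (s : ℂ) : hzetastar s 1 = riemannZeta s - 1 := by
  rw [hzetastar, hzeta]
  have h1 : ((1 : ℝ) : UnitAddCircle) = 0 := AddCircle.coe_period (p := (1:ℝ))
  rw [h1, HurwitzZeta.hurwitzZeta_zero, Complex.ofReal_one, Complex.one_cpow]

lemma integral_SS {m : ℕ} {s : ℂ} (hs : 1 - (m:ℝ) < s.re) (hs1 : s ≠ 1)
    {b : ℝ} (hb : b ∈ Set.Icc (0:ℝ) 1) :
    ∫ q in (0:ℝ)..b, SS m s q = (1 / (1 - s)) * SS (m + 1) (s - 1) b := by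
  have hσ : 1 < s.re + m := by linarith
  have hIocIcc : Set.Ioc (0:ℝ) b ⊆ Set.Icc 0 1 := fun x hx => ⟨hx.1.le, le_trans hx.2 hb.2⟩
  set Bn : ℕ → ℝ := fun n => (∏ i ∈ Finset.range m, ‖s + i‖) * 2 ^ |s.re + m|
      * (((n:ℝ) + 1) ^ (-(s.re + m))) with hBn
  have hBnn : ∀ n, 0 ≤ Bn n := by
    intro n; rw [hBn]; positivity
  have hRint : ∀ n : ℕ, IntegrableOn (fun q => Rr m s q n) (Set.Ioc 0 b) volume := by
    intro n
    have h := ((Rr_continuousOn m n s).mono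
      (Set.Icc_subset_Icc le_rfl hb.2)).integrableOn_Icc (μ := volume)
    exact h.mono_set Set.Ioc_subset_Icc_self
  have hnorm : ∀ n : ℕ, (∫ q in Set.Ioc (0:ℝ) b, ‖Rr m s q n‖) ≤ Bn n := by
    intro n
    have h1 : (∫ q in Set.Ioc (0:ℝ) b, ‖Rr m s q n‖) ≤ ∫ _ in Set.Ioc (0:ℝ) b, Bn n := by
      apply setIntegral_mono_on (hRint n).norm
        (integrableOn_const measure_Ioc_lt_top.ne) measurableSet_Ioc
      intro x hx
      exact Rr_norm_le m s n (hIocIcc hx)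
    have h2 : (∫ _ in Set.Ioc (0:ℝ) b, Bn n) = Bn n * b := by
      rw [setIntegral_const, Real.volume_real_Ioc_of_le hb.1, sub_zero,
        smul_eq_mul, mul_comm]
    rw [h2] at h1
    exact le_trans h1 (mul_le_of_le_one_right (hBnn n) hb.2)
  have hsum : Summable fun n => ∫ q in Set.Ioc (0:ℝ) b, ‖Rr m s q n‖ :=
    Summable.of_nonneg_of_le (fun n => integral_nonneg fun q => norm_nonneg _) hnorm
      ((summable_pow hσ).mul_left _)
  have hswap := MeasureTheory.integral_tsum_of_summable_integral_norm
    (F := fun n (q : ℝ) => Rr m s q n) (μ := volume.restrict (Set.Ioc 0 b)) hRint hsum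
  have hswap2 : ∑' n, ∫ a in Set.Ioc (0:ℝ) b, Rr m s a n
      = ∫ a in Set.Ioc (0:ℝ) b, SS m s a := hswap
  have hstep : ∫ q in (0:ℝ)..b, SS m s q = ∑' n, ∫ q in Set.Ioc (0:ℝ) b, Rr m s q n := by
    rw [intervalIntegral.integral_of_le hb.1, ← hswap2]
  rw [hstep]
  have hterm : ∀ n : ℕ, (∫ q in Set.Ioc (0:ℝ) b, Rr m s q n)
      = (1 / (1 - s)) * Rr (m + 1) (s - 1) b n := by
    intro n
    rw [← intervalIntegral.integral_of_le hb.1]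
    exact integral_Rr hs1 m n hb
  rw [tsum_congr hterm, tsum_mul_left]
  rfl

lemma integral_Zc {m : ℕ} (hm : 1 ≤ m) {s : ℂ} (hs : 1 - (m:ℝ) < s.re) (hs1 : s ≠ 1)
    {b : ℝ} (hb : b ∈ Set.Icc (0:ℝ) 1) :
    ∫ q in (0:ℝ)..b, Zc m s q = (riemannZeta (s - 1) - Zc (m + 1) (s - 1) b) / (s - 1) := by
  obtain ⟨k, rfl⟩ : ∃ k, m = k + 1 := ⟨m - 1, (Nat.succ_pred_eq_of_pos hm).symm⟩
  have hne : (1 - s) ≠ 0 := sub_ne_zero.2 fun h => hs1 h.symm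
  have hne' : (s - 1) ≠ 0 := sub_ne_zero.2 hs1
  have hSSint : IntervalIntegrable (fun q => SS (k+1) s q) volume 0 b := by
    apply ContinuousOn.intervalIntegrable
    apply (SS_continuousOn hs).mono
    rw [Set.uIcc_of_le hb.1]
    exact Set.Icc_subset_Icc le_rfl hb.2
  have hrest : Continuous (fun q : ℝ => riemannZeta s
      + ∑ i ∈ Finset.range k, (q : ℂ) ^ (i + 1) * HQ i s) := by
    apply continuous_const.add
    exact continuous_finset_sum _ fun i _ =>
      (Complex.continuous_ofReal.pow _).mul continuous_const
  have hZceq : (fun q : ℝ => Zc (k+1) s q) = fun q : ℝ => SS (k+1) s q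
      + (riemannZeta s + ∑ i ∈ Finset.range k, (q : ℂ) ^ (i + 1) * HQ i s) := by
    funext q
    rw [Zc, Nat.add_sub_cancel]
    ring
  have hsplit : ∫ q in (0:ℝ)..b, Zc (k+1) s q
      = (∫ q in (0:ℝ)..b, SS (k+1) s q)
        + ∫ q in (0:ℝ)..b, (riemannZeta s
            + ∑ i ∈ Finset.range k, (q : ℂ) ^ (i + 1) * HQ i s) := by
    rw [hZceq, intervalIntegral.integral_add hSSint (hrest.intervalIntegrable _ _)]
  have hrest2 : ∫ q in (0:ℝ)..b, (riemannZeta s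
        + ∑ i ∈ Finset.range k, (q : ℂ) ^ (i + 1) * HQ i s)
      = (b : ℂ) * riemannZeta s
        + ∑ i ∈ Finset.range k, ((b : ℂ) ^ (i + 2) / ((i : ℂ) + 2)) * HQ i s := by
    rw [intervalIntegral.integral_add
      (g := fun q : ℝ => ∑ i ∈ Finset.range k, (q : ℂ) ^ (i + 1) * HQ i s) (intervalIntegrable_const)
      ((continuous_finset_sum _ fun i _ =>
        (Complex.continuous_ofReal.pow _).mul continuous_const).intervalIntegrable _ _)]
    congr 1
    · rw [intervalIntegral.integral_const, sub_zero, Complex.real_smul]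
    · rw [intervalIntegral.integral_finset_sum (f := fun i (q : ℝ) => (q : ℂ) ^ (i + 1) * HQ i s) (fun i _ =>
        ((Complex.continuous_ofReal.pow _).mul continuous_const).intervalIntegrable _ _)]
      refine Finset.sum_congr rfl fun i _ => ?_
      rw [intervalIntegral.integral_mul_const, integral_cpow_nat]
      have h2 : ((((i+1 : ℕ)) : ℂ) + 1) = (i:ℂ) + 2 := by push_cast; ring
      rw [h2, show i+1+1 = i+2 from rfl]
  rw [hsplit, hrest2, integral_SS hs hs1 hb]
  -- RHS
  have hZc2 : Zc (k+1+1) (s-1) b = SS (k+2) (s-1) b + riemannZeta (s-1)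
      + ∑ i ∈ Finset.range (k+1), (b : ℂ) ^ (i+1) * HQ i (s-1) := by
    rw [Zc, Nat.add_sub_cancel]
  rw [hZc2]
  have hsum' : ∑ i ∈ Finset.range (k+1), (b : ℂ) ^ (i+1) * HQ i (s-1)
      = (∑ i ∈ Finset.range k, (b : ℂ) ^ (i+2) * HQ (i+1) (s-1)) + (b:ℂ) * ((1-s) * riemannZeta s) := by
    rw [Finset.sum_range_succ']
    have h0 : (b:ℂ)^(0+1) * HQ 0 (s-1) = (b:ℂ) * ((1-s) * riemannZeta s) := by
      rw [HQ_zero_eval hs1]; ring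
    rw [h0]
  rw [hsum']
  have hterm : ∀ i ∈ Finset.range k, (1 / (1 - s)) * ((b : ℂ) ^ (i+2) * HQ (i+1) (s-1))
      = ((b : ℂ) ^ (i + 2) / ((i : ℂ) + 2)) * HQ i s := by
    intro i _
    have hrec := HQ_rec i s
    have hi2 : ((i : ℂ) + 2) ≠ 0 := by
      have := Nat.cast_ne_zero (R := ℂ).2 (Nat.succ_ne_zero (i + 1))
      push_cast at this; rw [show ((i : ℂ) + 2) = (i : ℂ) + 1 + 1 by ring]; exact this
    field_simp
    linear_combination ((b : ℂ) ^ (i + 2)) * hrec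
  have hSfin : ∑ i ∈ Finset.range k, ((b : ℂ) ^ (i + 2) / ((i : ℂ) + 2)) * HQ i s
      = (1 / (1 - s)) * ∑ i ∈ Finset.range k, (b : ℂ) ^ (i+2) * HQ (i+1) (s-1) := by
    rw [Finset.mul_sum]
    exact (Finset.sum_congr rfl hterm).symm
  rw [hSfin]
  field_simp
  ring

lemma ibp_step {s : ℂ} (hs1 : s ≠ 1) (F F' : ℝ → ℝ)
    (hFc : ContinuousOn F (Set.Icc 0 1)) (hF'c : ContinuousOn F' (Set.Icc 0 1))
    (hder : ∀ x ∈ Set.Ioo (0:ℝ) 1, HasDerivAt F (F' x) x) :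
    ∫ q in (0:ℝ)..1, (F q : ℂ) * hzetastar s q
      = (1 / (1 - s)) * ((F 1 : ℂ) * (riemannZeta (s - 1) - 1)
          - (F 0 : ℂ) * riemannZeta (s - 1)
          - ∫ q in (0:ℝ)..1, (F' q : ℂ) * hzetastar (s - 1) q) := by
  classical
  have hne : (1 - s) ≠ 0 := sub_ne_zero.2 fun h => hs1 h.symm
  have hne' : (s - 1) ≠ 0 := sub_ne_zero.2 hs1
  obtain ⟨m, hm1, hsm⟩ : ∃ m : ℕ, 1 ≤ m ∧ 1 - (m:ℝ) < s.re := by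
    refine ⟨⌈|s.re|⌉₊ + 2, by omega, ?_⟩
    have h1 := Nat.le_ceil |s.re|
    have h2 : -|s.re| ≤ s.re := neg_abs_le s.re
    push_cast
    linarith
  have hsm' : 1 - ((m+1 : ℕ):ℝ) < (s-1).re := by
    rw [Complex.sub_re, Complex.one_re]
    push_cast
    linarith
  have h01 : Set.uIcc (0:ℝ) 1 = Set.Icc 0 1 := Set.uIcc_of_le zero_le_one
  set u : ℝ → ℂ := fun q => Zc (m+1) (s-1) q with hudef
  have hu_cont : ContinuousOn u (Set.Icc 0 1) := Zc_continuousOn hsm'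
  have hZc_cont : ContinuousOn (fun q : ℝ => Zc m s q) (Set.Icc 0 1) := Zc_continuousOn hsm
  have hu_eq : ∀ q ∈ Set.Icc (0:ℝ) 1, u q
      = riemannZeta (s-1) - (s-1) * ∫ t in (0:ℝ)..q, Zc m s t := by
    intro q hq
    have h := integral_Zc hm1 hsm hs1 hq
    rw [eq_div_iff hne'] at h
    show Zc (m+1) (s-1) q = riemannZeta (s-1) - (s-1) * ∫ t in (0:ℝ)..q, Zc m s t
    linear_combination h
  have hw : ∀ x ∈ Set.Ioo (0:ℝ) 1, HasDerivAt u ((1-s) * Zc m s x) x := by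
    intro x hx
    have hIoosub : Set.Ioo (0:ℝ) 1 ⊆ Set.Icc 0 1 := Set.Ioo_subset_Icc_self
    have hint : IntervalIntegrable (fun t => Zc m s t) volume 0 x := by
      apply ContinuousOn.intervalIntegrable
      apply hZc_cont.mono
      rw [Set.uIcc_of_le hx.1.le]
      exact Set.Icc_subset_Icc le_rfl hx.2.le
    have hmeas : StronglyMeasurableAtFilter (fun t => Zc m s t) (nhds x) volume :=
      ContinuousOn.stronglyMeasurableAtFilter isOpen_Ioo
        (hZc_cont.mono hIoosub) x hx
    have hct : ContinuousAt (fun t => Zc m s t) x :=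
      (hZc_cont.mono hIoosub).continuousAt (isOpen_Ioo.mem_nhds hx)
    have hI := intervalIntegral.integral_hasDerivAt_right hint hmeas hct
    have hwderiv := (hI.const_mul (s-1)).const_sub (riemannZeta (s-1))
    have hEq : (fun q => riemannZeta (s-1) - (s-1) * ∫ t in (0:ℝ)..q, Zc m s t) =ᶠ[nhds x] u := by
      apply Filter.eventuallyEq_of_mem (isOpen_Ioo.mem_nhds hx)
      intro y hy
      exact (hu_eq y (hIoosub hy)).symm
    have := hwderiv.congr_of_eventuallyEq hEq.symm
    have hfin : -((s-1) * Zc m s x) = (1-s) * Zc m s x := by ring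
    rwa [hfin] at this
  set g : ℝ → ℂ := fun q => (F q : ℂ) * u q with hgdef
  have hgc : ContinuousOn g (Set.Icc 0 1) :=
    (Complex.continuous_ofReal.comp_continuousOn hFc).mul hu_cont
  have hg' : ∀ x ∈ Set.Ioo (0:ℝ) 1, HasDerivAt g
      ((F' x : ℂ) * u x + (F x : ℂ) * ((1-s) * Zc m s x)) x := by
    intro x hx
    exact ((hder x hx).ofReal_comp).mul (hw x hx)
  have hintegrand_cont : ContinuousOn
      (fun x : ℝ => (F' x : ℂ) * u x + (F x : ℂ) * ((1-s) * Zc m s x)) (Set.Icc 0 1) := by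
    apply ContinuousOn.add
    · exact (Complex.continuous_ofReal.comp_continuousOn hF'c).mul hu_cont
    · exact (Complex.continuous_ofReal.comp_continuousOn hFc).mul
        (continuousOn_const.mul hZc_cont)
  have hint : IntervalIntegrable
      (fun x : ℝ => (F' x : ℂ) * u x + (F x : ℂ) * ((1-s) * Zc m s x)) volume 0 1 := by
    apply ContinuousOn.intervalIntegrable
    rwa [h01]
  have hFTC := intervalIntegral.integral_eq_sub_of_hasDerivAt_of_le zero_le_one hgc hg' hint
  have hint1 : IntervalIntegrable (fun x : ℝ => (F' x : ℂ) * u x) volume 0 1 := by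
    apply ContinuousOn.intervalIntegrable
    rw [h01]
    exact (Complex.continuous_ofReal.comp_continuousOn hF'c).mul hu_cont
  have hint2 : IntervalIntegrable (fun x : ℝ => (F x : ℂ) * ((1-s) * Zc m s x)) volume 0 1 := by
    apply ContinuousOn.intervalIntegrable
    rw [h01]
    exact (Complex.continuous_ofReal.comp_continuousOn hFc).mul
      (continuousOn_const.mul hZc_cont)
  rw [intervalIntegral.integral_add hint1 hint2] at hFTC
  have hu1 : u 1 = riemannZeta (s-1) - 1 := by
    have hml := ML (m := m+1) (by omega) (s := s-1) hsm' (q := (1:ℝ)) ⟨zero_lt_one, le_rfl⟩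
    rw [hzetastar_one] at hml
    exact hml.symm
  have hu0 : u 0 = riemannZeta (s-1) := Zc_zero (by omega) (s-1)
  -- replace integrals of Zc by integrals of hzetastar
  have hIoc_meas : MeasurableSet (Set.Ioc (0:ℝ) 1) := measurableSet_Ioc
  have hcongr1 : ∫ q in (0:ℝ)..1, (F q : ℂ) * hzetastar s q
      = ∫ q in (0:ℝ)..1, (F q : ℂ) * Zc m s q := by
    rw [intervalIntegral.integral_of_le zero_le_one, intervalIntegral.integral_of_le zero_le_one]
    apply setIntegral_congr_fun hIoc_meas
    intro q hq
    show (F q : ℂ) * hzetastar s q = (F q : ℂ) * Zc m s q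
    rw [ML hm1 hsm hq]
  have hcongr2 : ∫ q in (0:ℝ)..1, (F' q : ℂ) * hzetastar (s-1) q
      = ∫ q in (0:ℝ)..1, (F' q : ℂ) * u q := by
    rw [intervalIntegral.integral_of_le zero_le_one, intervalIntegral.integral_of_le zero_le_one]
    apply setIntegral_congr_fun hIoc_meas
    intro q hq
    show (F' q : ℂ) * hzetastar (s-1) q = (F' q : ℂ) * Zc (m+1) (s-1) q
    rw [ML (m := m+1) (by omega) hsm' hq]
  have hpull : ∫ q in (0:ℝ)..1, (F q : ℂ) * ((1-s) * Zc m s q)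
      = (1-s) * ∫ q in (0:ℝ)..1, (F q : ℂ) * Zc m s q := by
    rw [← intervalIntegral.integral_const_mul]
    congr 1
    funext q
    ring
  rw [hpull] at hFTC
  rw [hcongr1, hcongr2]
  have hgval : g 1 - g 0 = (F 1 : ℂ) * (riemannZeta (s-1) - 1) - (F 0 : ℂ) * riemannZeta (s-1) := by
    show (F 1 : ℂ) * u 1 - (F 0 : ℂ) * u 0 = _
    rw [hu1, hu0]
  rw [hgval] at hFTC
  have hgoal : (1-s) * (∫ q in (0:ℝ)..1, (F q:ℂ) * Zc m s q)
      = (F 1:ℂ) * (riemannZeta (s-1) - 1) - (F 0:ℂ) * riemannZeta (s-1)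
        - ∫ x in (0:ℝ)..1, (F' x:ℂ) * u x := by
    linear_combination hFTC
  rw [← hgoal, one_div, ← mul_assoc, inv_mul_cancel₀ hne, one_mul]
lemma poch_eval (z : ℝ) : ∀ k : ℕ,
    (ascPochhammer ℝ k).eval (1 - z) = ∏ i ∈ Finset.range k, (1 - z + i) := by
  intro k
  induction k with
  | zero => simp
  | succ k ih =>
    rw [ascPochhammer_succ_right, Finset.prod_range_succ, ← ih]
    simp [Polynomial.eval_mul]

lemma main_aux (z : ℝ) (f : ℝ → ℝ) :
    ∀ N : ℕ, (∀ k : ℕ, 1 ≤ k → k ≤ N → z ≠ k) → ContDiffOn ℝ N f (Set.Icc 0 1) →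
    (∫ q in (0:ℝ)..1, (f q : ℂ) * hzetastar z q) =
      -(∑ k ∈ Finset.range N, (-1 : ℂ) ^ k *
          ((iteratedDerivWithin k f (Set.Icc 0 1) 1 : ℝ) : ℂ)
          / (((ascPochhammer ℝ (k + 1)).eval (1 - z) : ℝ) : ℂ))
      + (∑ k ∈ Finset.range N, (-1 : ℂ) ^ k *
          (((iteratedDerivWithin k f (Set.Icc 0 1) 1
              - iteratedDerivWithin k f (Set.Icc 0 1) 0 : ℝ)) : ℂ)
          * riemannZeta ((z : ℂ) - k - 1)
          / (((ascPochhammer ℝ (k + 1)).eval (1 - z) : ℝ) : ℂ))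
      + ((-1 : ℂ) ^ N / (((ascPochhammer ℝ N).eval (1 - z) : ℝ) : ℂ)) *
          ∫ q in (0:ℝ)..1,
            ((iteratedDerivWithin N f (Set.Icc 0 1) q : ℝ) : ℂ) * hzetastar ((z : ℂ) - N) q := by
  intro N
  induction N with
  | zero =>
    intro hz hf
    simp [iteratedDerivWithin_zero]
  | succ N IH =>
    intro hz hf
    have hzN' : ∀ k : ℕ, 1 ≤ k → k ≤ N → z ≠ k := fun k h1 h2 => hz k h1 (by omega)
    have hfN : ContDiffOn ℝ N f (Set.Icc 0 1) := hf.of_le (by exact_mod_cast N.le_succ)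
    have hIH := IH hzN' hfN
    have hUD : UniqueDiffOn ℝ (Set.Icc (0:ℝ) 1) := uniqueDiffOn_Icc zero_lt_one
    set F : ℝ → ℝ := iteratedDerivWithin N f (Set.Icc 0 1) with hFdef
    set F' : ℝ → ℝ := iteratedDerivWithin (N + 1) f (Set.Icc 0 1) with hF'def
    have hFc : ContinuousOn F (Set.Icc 0 1) :=
      hf.continuousOn_iteratedDerivWithin (by exact_mod_cast N.le_succ) hUD
    have hF'c : ContinuousOn F' (Set.Icc 0 1) :=
      hf.continuousOn_iteratedDerivWithin (by norm_num) hUD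
    have hdiff : DifferentiableOn ℝ F (Set.Icc 0 1) :=
      hf.differentiableOn_iteratedDerivWithin (by exact_mod_cast N.lt_succ_self) hUD
    have hder : ∀ x ∈ Set.Ioo (0:ℝ) 1, HasDerivAt F (F' x) x := by
      intro x hx
      have hx' : x ∈ Set.Icc (0:ℝ) 1 := Set.Ioo_subset_Icc_self hx
      have h1 := (hdiff x hx').hasDerivWithinAt
      have hnh : Set.Icc (0:ℝ) 1 ∈ nhds x := Icc_mem_nhds hx.1 hx.2
      have h2 := h1.hasDerivAt hnh
      have h3 : F' x = derivWithin F (Set.Icc 0 1) x :=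
        by rw [hF'def, iteratedDerivWithin_succ]
      rwa [← h3] at h2
    have hzN1 : ((z:ℂ) - (N:ℂ)) ≠ 1 := by
      intro h
      apply hz (N + 1) (by omega) le_rfl
      have h2 : (z:ℂ) = ((N:ℂ) + 1) := by linear_combination h
      have h3 : ((z:ℝ):ℂ) = (((N + 1 : ℕ):ℝ):ℂ) := by push_cast; exact h2
      exact_mod_cast h3
    have hibp := ibp_step hzN1 F F' hFc hF'c hder
    -- Pochhammer facts
    have hPne : ∀ k : ℕ, k ≤ N + 1 → (ascPochhammer ℝ k).eval (1 - z) ≠ 0 := by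
      intro k hk
      rw [poch_eval]
      apply Finset.prod_ne_zero_iff.2
      intro i hi
      have hiz : z ≠ (i + 1 : ℕ) := hz (i + 1) (by omega)
        (by have := Finset.mem_range.1 hi; omega)
      intro hc
      apply hiz
      push_cast
      linarith
    have hPN : ((ascPochhammer ℝ N).eval (1 - z) : ℝ) ≠ 0 := hPne N (by omega)
    have hPN1 : ((ascPochhammer ℝ (N+1)).eval (1 - z) : ℝ) ≠ 0 := hPne (N+1) le_rfl
    have hPsucc : ((ascPochhammer ℝ (N+1)).eval (1 - z) : ℝ)
        = ((ascPochhammer ℝ N).eval (1 - z)) * (1 - z + N) := by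
      rw [ascPochhammer_succ_right]
      simp [Polynomial.eval_mul]
    have hfac : ((1:ℝ) - z + N) ≠ 0 := by
      intro hc
      rw [hPsucc, hc, mul_zero] at hPN1
      exact hPN1 rfl
    -- cast versions
    have hPNc : (((ascPochhammer ℝ N).eval (1 - z) : ℝ) : ℂ) ≠ 0 := by
      exact_mod_cast hPN
    have hPN1c : (((ascPochhammer ℝ (N+1)).eval (1 - z) : ℝ) : ℂ) ≠ 0 := by
      exact_mod_cast hPN1
    have hfacc : ((1:ℂ) - (z:ℂ) + (N:ℂ)) ≠ 0 := by
      have : (((1 - z + N : ℝ)) : ℂ) ≠ 0 := by exact_mod_cast hfac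
      push_cast at this
      convert this using 2
    have hone : (1:ℂ) - ((z:ℂ) - (N:ℂ)) = 1 - (z:ℂ) + (N:ℂ) := by ring
    have hPsc : (((ascPochhammer ℝ (N+1)).eval (1 - z) : ℝ) : ℂ)
        = (((ascPochhammer ℝ N).eval (1 - z) : ℝ) : ℂ) * ((1:ℂ) - (z:ℂ) + (N:ℂ)) := by
      rw [hPsucc]
      push_cast
      ring
    have hcast : ((z:ℂ) - ((N + 1 : ℕ) : ℂ)) = (z:ℂ) - (N:ℂ) - 1 := by
      push_cast; ring
    rw [hIH, hibp, hone]
    rw [Finset.sum_range_succ, Finset.sum_range_succ, hcast, hPsc]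
    field_simp
    rw [hFdef]
    push_cast
    ring

end Stmt9

theorem stmt_9 (n : ℕ) (hn : 0 < n) (z : ℝ)
    (hz : ∀ k : ℕ, 1 ≤ k → k ≤ n + 1 → z ≠ k)
    (f : ℝ → ℝ) (hf : ContDiffOn ℝ n f (Set.Icc 0 1)) :
    (∫ q in (0:ℝ)..1, (f q : ℂ) * hzetastar z q) =
      -(∑ k ∈ Finset.range n, (-1 : ℂ) ^ k *
          ((iteratedDerivWithin k f (Set.Icc 0 1) 1 : ℝ) : ℂ)
          / (((ascPochhammer ℝ (k + 1)).eval (1 - z) : ℝ) : ℂ))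
      + (∑ k ∈ Finset.range n, (-1 : ℂ) ^ k *
          (((iteratedDerivWithin k f (Set.Icc 0 1) 1
              - iteratedDerivWithin k f (Set.Icc 0 1) 0 : ℝ)) : ℂ)
          * riemannZeta ((z : ℂ) - k - 1)
          / (((ascPochhammer ℝ (k + 1)).eval (1 - z) : ℝ) : ℂ))
      + ((-1 : ℂ) ^ n / (((ascPochhammer ℝ n).eval (1 - z) : ℝ) : ℂ)) *
          ∫ q in (0:ℝ)..1,
            ((iteratedDerivWithin n f (Set.Icc 0 1) q : ℝ) : ℂ) * hzetastar ((z : ℂ) - n) q :=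
  Stmt9.main_aux z f n (fun k h1 h2 => hz k h1 (by omega)) hf
end
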